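/- arXiv:2508.09671 — 6 statements merged into one kernel-verified Lean document; each statement's English description precedes it below -/
import Mathlib

section
/- Let Φ be the standard normal CDF and set a_n = Φ⁻¹(1 - 1/n). Then for any real t: if t < 0 then Φ(a_n + t)^n → 0; if t = 0 then Φ(a_n)^n → e⁻¹; if t > 0 then Φ(a_n + t)^n → 1 as n → ∞. -/
open Filter MeasureTheory

/-- The standard normal cumulative distribution function. -/
noncomputable def Phi (x : ℝ) : ℝ :=
  ∫ t in Set.Iic x, Real.exp (-t ^ 2 / 2) / Real.sqrt (2 * Real.pi)

/-- The inverse of the standard normal CDF. -/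
noncomputable def PhiInv (p : ℝ) : ℝ := Function.invFun Phi p

/-- a_n = Φ⁻¹(1 - 1/n). -/
noncomputable def aSeq (n : ℕ) : ℝ := PhiInv (1 - 1 / n)

namespace PhiAux

open Real Set

noncomputable def phi (x : ℝ) : ℝ := Real.exp (-x ^ 2 / 2) / Real.sqrt (2 * Real.pi)

lemma phi_pos (x : ℝ) : 0 < phi x :=
  div_pos (Real.exp_pos _) (Real.sqrt_pos.2 (by positivity))

lemma phi_integrable : Integrable phi := by
  have h : Integrable (fun x : ℝ => Real.exp (-(1/2 : ℝ) * x ^ 2)) :=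
    integrable_exp_neg_mul_sq (by norm_num)
  have := h.div_const (Real.sqrt (2 * Real.pi))
  refine this.congr (Eventually.of_forall fun x => ?_)
  unfold phi
  ring_nf

lemma phi_total : ∫ x, phi x = 1 := by
  have h : ∫ x : ℝ, Real.exp (-(1/2 : ℝ) * x ^ 2) = Real.sqrt (Real.pi / (1/2)) :=
    integral_gaussian (1/2)
  have h2 : (fun x : ℝ => phi x) = fun x => Real.exp (-(1/2 : ℝ) * x ^ 2) / Real.sqrt (2 * Real.pi) := by
    funext x; unfold phi; ring_nf
  rw [h2, integral_div, h]
  rw [show Real.pi / (1/2) = 2 * Real.pi by ring]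
  exact div_self (by positivity)

/-- tail -/
noncomputable def T (x : ℝ) : ℝ := ∫ u in Set.Ioi x, phi u

lemma Phi_eq (x : ℝ) : Phi x = ∫ u in Set.Iic x, phi u := rfl

lemma Phi_add_T (x : ℝ) : Phi x + T x = 1 := by
  rw [Phi_eq, T, ← phi_total, ← Set.compl_Iic]
  exact integral_add_compl measurableSet_Iic phi_integrable

lemma T_pos (x : ℝ) : 0 < T x := by
  rw [T]
  refine (setIntegral_pos_iff_support_of_nonneg_ae
    (Eventually.of_forall fun u => (phi_pos u).le) phi_integrable.integrableOn).2 ?_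
  have : Function.support phi = Set.univ := Set.eq_univ_of_forall fun u => (phi_pos u).ne'
  rw [this, Set.univ_inter, Real.volume_Ioi]
  exact ENNReal.zero_lt_top

lemma Phi_pos (x : ℝ) : 0 < Phi x := by
  rw [Phi_eq]
  refine (setIntegral_pos_iff_support_of_nonneg_ae
    (Eventually.of_forall fun u => (phi_pos u).le) phi_integrable.integrableOn).2 ?_
  have : Function.support phi = Set.univ := Set.eq_univ_of_forall fun u => (phi_pos u).ne'
  rw [this, Set.univ_inter, Real.volume_Iic]
  exact ENNReal.zero_lt_top

lemma Phi_lt_one (x : ℝ) : Phi x < 1 := by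
  have := Phi_add_T x; have := T_pos x; linarith

lemma Phi_sub (x y : ℝ) : Phi y - Phi x = ∫ u in x..y, phi u :=
  intervalIntegral.integral_Iic_sub_Iic phi_integrable.integrableOn phi_integrable.integrableOn

lemma Phi_strictMono : StrictMono Phi := by
  intro x y hxy
  have h := Phi_sub x y
  have hpos : 0 < ∫ u in x..y, phi u :=
    intervalIntegral.intervalIntegral_pos_of_pos phi_integrable.intervalIntegrable phi_pos hxy
  linarith

lemma Phi_continuous : Continuous Phi := by
  have h : Phi = fun x => Phi 0 + ∫ u in (0:ℝ)..x, phi u := by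
    funext x
    have := Phi_sub 0 x
    linarith
  rw [h]
  exact continuous_const.add
    (intervalIntegral.continuous_primitive (fun a b => phi_integrable.intervalIntegrable) 0)

lemma tendsto_Phi_top : Tendsto (fun n : ℕ => Phi (n : ℝ)) atTop (nhds 1) := by
  have h := tendsto_setIntegral_of_monotone (f := phi) (μ := volume)
    (s := fun n : ℕ => Set.Iic (n : ℝ)) (fun n => measurableSet_Iic)
    (fun m n hmn => Set.Iic_subset_Iic.2 (by exact_mod_cast hmn))
    phi_integrable.integrableOn
  have hU : (⋃ n : ℕ, Set.Iic ((n : ℝ))) = Set.univ := by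
    refine Set.eq_univ_of_forall fun x => ?_
    obtain ⟨n, hn⟩ := exists_nat_ge x
    exact Set.mem_iUnion.2 ⟨n, hn⟩
  rw [hU] at h
  simpa [Phi_eq, setIntegral_univ, phi_total] using h

lemma tendsto_Phi_bot : Tendsto (fun n : ℕ => Phi (-(n : ℝ))) atTop (nhds 0) := by
  have h := tendsto_setIntegral_of_antitone (f := phi) (μ := volume)
    (s := fun n : ℕ => Set.Iic (-(n : ℝ))) (fun n => measurableSet_Iic)
    (fun m n hmn => Set.Iic_subset_Iic.2 (by exact_mod_cast neg_le_neg (Nat.cast_le.2 hmn)))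
    ⟨0, phi_integrable.integrableOn⟩
  have hI : (⋂ n : ℕ, Set.Iic (-(n : ℝ))) = ∅ := by
    refine Set.eq_empty_of_forall_notMem fun x hx => ?_
    obtain ⟨n, hn⟩ := exists_nat_gt (-x)
    have := Set.mem_iInter.1 hx n
    simp only [Set.mem_Iic] at this
    linarith
  rw [hI] at h
  simpa [Phi_eq] using h

lemma exists_Phi_eq {p : ℝ} (h0 : 0 < p) (h1 : p < 1) : ∃ x, Phi x = p := by
  obtain ⟨a, ha⟩ : ∃ a : ℝ, Phi a < p := by
    have := tendsto_Phi_bot.eventually_lt_const h0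
    obtain ⟨n, hn⟩ := this.exists
    exact ⟨-(n : ℝ), hn⟩
  obtain ⟨b, hb⟩ : ∃ b : ℝ, p < Phi b := by
    have := tendsto_Phi_top.eventually_const_lt h1
    obtain ⟨n, hn⟩ := this.exists
    exact ⟨(n : ℝ), hn⟩
  have hab : a ≤ b := (Phi_strictMono.lt_iff_lt.1 (ha.trans hb)).le
  obtain ⟨x, _, hx⟩ := intermediate_value_Icc hab Phi_continuous.continuousOn
    (Set.mem_Icc.2 ⟨ha.le, hb.le⟩)
  exact ⟨x, hx⟩

lemma Phi_invFun {p : ℝ} (h0 : 0 < p) (h1 : p < 1) : Phi (PhiInv p) = p :=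
  Function.invFun_eq (exists_Phi_eq h0 h1)

lemma Phi_aSeq {n : ℕ} (hn : 2 ≤ n) : Phi (aSeq n) = 1 - 1 / n := by
  have hn0 : (0:ℝ) < n := by exact_mod_cast Nat.lt_of_lt_of_le two_pos hn
  have hn2 : (2:ℝ) ≤ n := by exact_mod_cast hn
  refine Phi_invFun ?_ ?_
  · have : (1:ℝ)/n ≤ 1/2 := by
      apply div_le_div_of_nonneg_left <;> linarith
    linarith
  · have : (0:ℝ) < 1/n := by positivity
    linarith

lemma T_aSeq {n : ℕ} (hn : 2 ≤ n) : T (aSeq n) = 1 / n := by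
  have h := Phi_add_T (aSeq n)
  rw [Phi_aSeq hn] at h
  linarith

lemma aSeq_tendsto : Tendsto aSeq atTop atTop := by
  rw [tendsto_atTop]
  intro M
  have hTM : 0 < T M := T_pos M
  have h1 : ∀ᶠ n : ℕ in atTop, 1 / (n:ℝ) < T M :=
    tendsto_one_div_atTop_nhds_zero_nat.eventually_lt_const hTM
  filter_upwards [h1, eventually_ge_atTop 2] with n hn h2
  have hPhi : Phi M < Phi (aSeq n) := by
    rw [Phi_aSeq h2]
    have := Phi_add_T M
    linarith
  exact (Phi_strictMono.lt_iff_lt.1 hPhi).le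

lemma phi_shift (u t : ℝ) : phi (u + t) = Real.exp (-(u * t + t ^ 2 / 2)) * phi u := by
  unfold phi
  rw [eq_comm, mul_div_assoc', ← Real.exp_add]
  ring_nf

lemma T_translate (x t : ℝ) : T (x + t) = ∫ u in Set.Ioi x, phi (u + t) := by
  rw [T, ← integral_indicator measurableSet_Ioi,
    ← integral_add_right_eq_self (fun u => (Set.Ioi (x + t)).indicator phi u) t,
    ← integral_indicator measurableSet_Ioi]
  congr 1
  funext u
  simp [Set.indicator_apply, Set.mem_Ioi]

lemma phi_shift_integrableOn (x t : ℝ) :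
    IntegrableOn (fun u => phi (u + t)) (Set.Ioi x) := by
  exact (phi_integrable.comp_add_right t).integrableOn

lemma T_le_of_pos {x t : ℝ} (ht : 0 < t) :
    T (x + t) ≤ Real.exp (-(x * t + t ^ 2 / 2)) * T x := by
  rw [T_translate, T, ← integral_const_mul]
  refine setIntegral_mono_on (phi_shift_integrableOn x t)
    (phi_integrable.integrableOn.const_mul _) measurableSet_Ioi fun u hu => ?_
  rw [phi_shift]
  have hux : x ≤ u := (Set.mem_Ioi.1 hu).le
  have : -(u * t + t ^ 2 / 2) ≤ -(x * t + t ^ 2 / 2) := by nlinarith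
  exact mul_le_mul_of_nonneg_right (Real.exp_le_exp.2 this) (phi_pos u).le

lemma T_ge_of_neg {x t : ℝ} (ht : t < 0) :
    Real.exp (-(x * t + t ^ 2 / 2)) * T x ≤ T (x + t) := by
  rw [T_translate, T, ← integral_const_mul]
  refine setIntegral_mono_on (phi_integrable.integrableOn.const_mul _)
    (phi_shift_integrableOn x t) measurableSet_Ioi fun u hu => ?_
  rw [phi_shift]
  have hux : x ≤ u := (Set.mem_Ioi.1 hu).le
  have : -(x * t + t ^ 2 / 2) ≤ -(u * t + t ^ 2 / 2) := by nlinarith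
  exact mul_le_mul_of_nonneg_right (Real.exp_le_exp.2 this) (phi_pos u).le

lemma T_lt_one (x : ℝ) : T x < 1 := by
  have := Phi_add_T x; have := Phi_pos x; linarith

lemma exp_exponent_tendsto {t : ℝ} (ht : 0 < t) :
    Tendsto (fun n : ℕ => Real.exp (-(aSeq n * t + t ^ 2 / 2))) atTop (nhds 0) := by
  apply Real.tendsto_exp_atBot.comp
  apply tendsto_neg_atTop_atBot.comp
  exact tendsto_atTop_add_const_right _ _ (aSeq_tendsto.atTop_mul_const ht)

lemma exp_exponent_tendsto_neg {t : ℝ} (ht : t < 0) :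
    Tendsto (fun n : ℕ => Real.exp (-(aSeq n * t + t ^ 2 / 2))) atTop atTop := by
  apply Real.tendsto_exp_atTop.comp
  have : Tendsto (fun n : ℕ => aSeq n * (-t)) atTop atTop :=
    aSeq_tendsto.atTop_mul_const (by linarith)
  have h2 := tendsto_atTop_add_const_right atTop (-(t ^ 2 / 2)) this
  refine h2.congr fun n => by ring

end PhiAux

open PhiAux in
theorem stmt1 (t : ℝ) :
    (t < 0 → Tendsto (fun n : ℕ => (Phi (aSeq n + t)) ^ n) atTop (nhds 0)) ∧
    (t = 0 → Tendsto (fun n : ℕ => (Phi (aSeq n + t)) ^ n) atTop (nhds (Real.exp (-1)))) ∧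
    (0 < t → Tendsto (fun n : ℕ => (Phi (aSeq n + t)) ^ n) atTop (nhds 1)) := by
  refine ⟨?_, ?_, ?_⟩
  · -- t < 0
    intro ht
    have hnT : Tendsto (fun n : ℕ => (n : ℝ) * T (aSeq n + t)) atTop atTop := by
      refine tendsto_atTop_mono' _ ?_ (exp_exponent_tendsto_neg ht)
      filter_upwards [eventually_ge_atTop 2] with n hn
      have hTn := T_aSeq hn
      have hn0 : (0:ℝ) < n := by exact_mod_cast Nat.lt_of_lt_of_le two_pos hn
      calc Real.exp (-(aSeq n * t + t ^ 2 / 2))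
          = (n:ℝ) * (Real.exp (-(aSeq n * t + t ^ 2 / 2)) * T (aSeq n)) := by
            rw [hTn]; field_simp
        _ ≤ (n:ℝ) * T (aSeq n + t) :=
            mul_le_mul_of_nonneg_left (T_ge_of_neg ht) hn0.le
    have hub : Tendsto (fun n : ℕ => Real.exp (-((n:ℝ) * T (aSeq n + t)))) atTop (nhds 0) :=
      Real.tendsto_exp_atBot.comp (tendsto_neg_atBot_iff.2 hnT)
    refine tendsto_of_tendsto_of_tendsto_of_le_of_le' tendsto_const_nhds hub ?_ ?_
    · exact Eventually.of_forall fun n => pow_nonneg (Phi_pos _).le n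
    · refine Eventually.of_forall fun n => ?_
      have h1 : Phi (aSeq n + t) = 1 - T (aSeq n + t) := by
        have := Phi_add_T (aSeq n + t); linarith
      have h2 : Phi (aSeq n + t) ≤ Real.exp (-(T (aSeq n + t))) := by
        rw [h1]
        have := Real.add_one_le_exp (-(T (aSeq n + t)))
        linarith
      calc Phi (aSeq n + t) ^ n ≤ Real.exp (-(T (aSeq n + t))) ^ n :=
            pow_le_pow_left₀ (Phi_pos _).le h2 n
        _ = Real.exp (-((n:ℝ) * T (aSeq n + t))) := by
            rw [← Real.exp_nat_mul]; ring_nf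
  · -- t = 0
    rintro rfl
    have := Real.tendsto_one_add_div_pow_exp (-1)
    refine this.congr' ?_
    filter_upwards [eventually_ge_atTop 2] with n hn
    rw [add_zero, Phi_aSeq hn]
    ring_nf
  · -- 0 < t
    intro ht
    have hnT : Tendsto (fun n : ℕ => (n : ℝ) * T (aSeq n + t)) atTop (nhds 0) := by
      refine tendsto_of_tendsto_of_tendsto_of_le_of_le' tendsto_const_nhds
        (exp_exponent_tendsto ht) ?_ ?_
      · exact Eventually.of_forall fun n => mul_nonneg (Nat.cast_nonneg n) (T_pos _).le
      · filter_upwards [eventually_ge_atTop 2] with n hn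
        have hTn := T_aSeq hn
        have hn0 : (0:ℝ) < n := by exact_mod_cast Nat.lt_of_lt_of_le two_pos hn
        calc (n:ℝ) * T (aSeq n + t) ≤ (n:ℝ) * (Real.exp (-(aSeq n * t + t ^ 2 / 2)) * T (aSeq n)) :=
              mul_le_mul_of_nonneg_left (T_le_of_pos ht) hn0.le
          _ = Real.exp (-(aSeq n * t + t ^ 2 / 2)) := by rw [hTn]; field_simp
    have hlb : Tendsto (fun n : ℕ => 1 - (n:ℝ) * T (aSeq n + t)) atTop (nhds 1) := by
      have := (tendsto_const_nhds : Tendsto (fun _ : ℕ => (1:ℝ)) atTop (nhds 1)).sub hnT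
      simpa using this
    refine tendsto_of_tendsto_of_tendsto_of_le_of_le' hlb tendsto_const_nhds ?_ ?_
    · refine Eventually.of_forall fun n => ?_
      have h1 : Phi (aSeq n + t) = 1 + (-(T (aSeq n + t))) := by
        have := Phi_add_T (aSeq n + t); linarith
      have hT1 := T_lt_one (aSeq n + t)
      have hT0 := T_pos (aSeq n + t)
      calc 1 - (n:ℝ) * T (aSeq n + t) = 1 + (n:ℝ) * (-(T (aSeq n + t))) := by ring
        _ ≤ (1 + (-(T (aSeq n + t)))) ^ n := one_add_mul_le_pow (by linarith) n
        _ = Phi (aSeq n + t) ^ n := by rw [← h1]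
    · refine Eventually.of_forall fun n => ?_
      exact pow_le_one₀ (Phi_pos _).le (Phi_lt_one _).le
end

section
/- With a_n = Φ⁻¹(1-1/n): for any random variable X, any t > 0 and any constant k with P(X = k) = 0, the expectation E[Φ(a_n + t(X - k))^n] converges to P(X > k) as n → ∞. -/
open Filter MeasureTheory ProbabilityTheory Set Topology

namespace StdGauss

noncomputable def phi (x : ℝ) : ℝ := Real.exp (-x ^ 2 / 2) / Real.sqrt (2 * Real.pi)

lemma sqrt_pos' : 0 < Real.sqrt (2 * Real.pi) :=
  Real.sqrt_pos.2 (by positivity)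

lemma phi_pos (x : ℝ) : 0 < phi x := div_pos (Real.exp_pos _) sqrt_pos'

lemma phi_nonneg (x : ℝ) : 0 ≤ phi x := (phi_pos x).le

lemma continuous_phi : Continuous phi := by
  unfold phi
  fun_prop

lemma phi_eq (x : ℝ) : phi x = Real.exp (-(1/2) * x ^ 2) / Real.sqrt (2 * Real.pi) := by
  unfold phi; ring_nf

lemma integrable_phi : Integrable phi := by
  have h := (integrable_exp_neg_mul_sq (by norm_num : (0:ℝ) < 1/2)).div_const
    (Real.sqrt (2 * Real.pi))
  refine h.congr (Eventually.of_forall fun x => ?_)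
  rw [phi_eq]

lemma integral_phi : ∫ x, phi x = 1 := by
  simp_rw [phi_eq]
  rw [integral_div, integral_gaussian]
  rw [div_eq_one_iff_eq sqrt_pos'.ne']
  norm_num
  ring

lemma phi_anti {x y : ℝ} (hx : 0 ≤ x) (hxy : x ≤ y) : phi y ≤ phi x := by
  unfold phi
  have h2 : x ^ 2 ≤ y ^ 2 := by nlinarith
  gcongr


noncomputable def T (x : ℝ) : ℝ := ∫ u in Ioi x, phi u

lemma Phi_eq (x : ℝ) : Phi x = ∫ u in Iic x, phi u := rfl

lemma Phi_add_T (x : ℝ) : Phi x + T x = 1 := by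
  rw [Phi_eq, T, intervalIntegral.integral_Iic_add_Ioi integrable_phi.integrableOn integrable_phi.integrableOn,
    integral_phi]

lemma T_eq (x : ℝ) : T x = 1 - Phi x := by linarith [Phi_add_T x]

lemma setIntegral_phi_pos {s : Set ℝ} (hs : MeasurableSet s) (h : 0 < volume s) :
    0 < ∫ u in s, phi u := by
  rw [setIntegral_pos_iff_support_of_nonneg_ae
    (Eventually.of_forall fun x => phi_nonneg x) integrable_phi.integrableOn]
  have : Function.support phi = Set.univ := by
    ext x; simp [Function.support, (phi_pos x).ne']
  rw [this, Set.univ_inter]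
  exact h

lemma T_pos (x : ℝ) : 0 < T x :=
  setIntegral_phi_pos measurableSet_Ioi (by simp)

lemma Phi_pos (x : ℝ) : 0 < Phi x :=
  setIntegral_phi_pos measurableSet_Iic (by simp)

lemma Phi_lt_one (x : ℝ) : Phi x < 1 := by linarith [Phi_add_T x, T_pos x]

lemma Phi_le_one (x : ℝ) : Phi x ≤ 1 := (Phi_lt_one x).le

lemma Phi_strictMono : StrictMono Phi := by
  intro x y hxy
  have hsplit : Iic y = Iic x ∪ Ioc x y := (Set.Iic_union_Ioc_eq_Iic hxy.le).symm
  have hdisj : Disjoint (Iic x) (Ioc x y) := Iic_disjoint_Ioc le_rfl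
  rw [Phi_eq, Phi_eq, hsplit,
    setIntegral_union hdisj measurableSet_Ioc integrable_phi.integrableOn
      integrable_phi.integrableOn]
  have := setIntegral_phi_pos measurableSet_Ioc (by simp [Real.volume_Ioc, hxy] : 0 < volume (Ioc x y))
  linarith

lemma continuous_Phi : Continuous Phi := by
  have h : ∀ x : ℝ, Phi x = (∫ u in (0:ℝ)..x, phi u) + Phi 0 := by
    intro x
    rw [Phi_eq, Phi_eq, ← intervalIntegral.integral_Iic_sub_Iic integrable_phi.integrableOn
      integrable_phi.integrableOn]
    ring
  rw [funext h]
  exact (intervalIntegral.continuous_primitive (fun a b => integrable_phi.intervalIntegrable) 0).add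
    continuous_const

lemma tendsto_Phi_atTop : Tendsto Phi atTop (𝓝 1) := by
  have h := tendsto_setIntegral_of_monotone (μ := volume) (f := phi)
    (s := fun x : ℝ => Iic x) (fun _ => measurableSet_Iic)
    (fun a b hab => Iic_subset_Iic.2 hab)
    (by rw [Set.iUnion_Iic]; exact integrable_phi.integrableOn)
  rw [Set.iUnion_Iic] at h
  simp only [Measure.restrict_univ, integral_phi] at h
  exact h

lemma tendsto_T_atBot : Tendsto T atBot (𝓝 1) := by
  have h : Tendsto (fun x : ℝ => T (-x)) atTop (𝓝 1) := by
    have h := tendsto_setIntegral_of_monotone (μ := volume) (f := phi)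
      (s := fun x : ℝ => Ioi (-x)) (fun _ => measurableSet_Ioi)
      (fun a b hab => Ioi_subset_Ioi (neg_le_neg hab))
      (by
        have : ⋃ x : ℝ, Ioi (-x) = Set.univ := by
          ext y; simp only [Set.mem_iUnion, Set.mem_Ioi, Set.mem_univ, iff_true]
          exact ⟨-(y - 1), by linarith⟩
        rw [this]; exact integrable_phi.integrableOn)
    have hu : ⋃ x : ℝ, Ioi (-x) = Set.univ := by
      ext y; simp only [Set.mem_iUnion, Set.mem_Ioi, Set.mem_univ, iff_true]
      exact ⟨-(y - 1), by linarith⟩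
    rw [hu] at h
    simpa [T, integral_phi] using h
  have h2 := h.comp (tendsto_neg_atBot_atTop : Tendsto (fun x : ℝ => -x) atBot atTop)
  refine h2.congr fun x => ?_
  simp [Function.comp]

lemma tendsto_Phi_atBot : Tendsto Phi atBot (𝓝 0) := by
  have : Phi = fun x => 1 - T x := by ext x; linarith [Phi_add_T x]
  rw [this]
  have := (tendsto_const_nhds (x := (1:ℝ)) (f := (atBot : Filter ℝ))).sub tendsto_T_atBot
  simpa using this

lemma exists_Phi_eq {p : ℝ} (h0 : 0 < p) (h1 : p < 1) : ∃ x, Phi x = p := by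
  obtain ⟨a, ha⟩ := (tendsto_Phi_atBot.eventually_lt_const h0).exists
  obtain ⟨b, hb⟩ := (tendsto_Phi_atTop.eventually_const_lt h1).exists
  have hab : a ≤ b := (Phi_strictMono.lt_iff_lt.1 (by linarith)).le
  have := intermediate_value_Icc hab continuous_Phi.continuousOn
  obtain ⟨x, _, hx⟩ := this ⟨ha.le, hb.le⟩
  exact ⟨x, hx⟩

lemma Phi_PhiInv {p : ℝ} (h0 : 0 < p) (h1 : p < 1) : Phi (PhiInv p) = p :=
  Function.invFun_eq (exists_Phi_eq h0 h1)

lemma Phi_aSeq {n : ℕ} (hn : 2 ≤ n) : Phi (aSeq n) = 1 - 1 / n := by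
  have hn' : (2:ℝ) ≤ n := by exact_mod_cast hn
  refine Phi_PhiInv ?_ ?_
  · have : 1 / (n:ℝ) ≤ 1 / 2 := by
      apply one_div_le_one_div_of_le <;> linarith
    linarith
  · have : 0 < 1 / (n:ℝ) := by positivity
    linarith

lemma T_aSeq {n : ℕ} (hn : 2 ≤ n) : T (aSeq n) = 1 / n := by
  rw [T_eq, Phi_aSeq hn]; ring

lemma tendsto_aSeq : Tendsto aSeq atTop atTop := by
  rw [tendsto_atTop]
  intro M
  have hlim : Tendsto (fun n : ℕ => 1 - 1 / (n:ℝ)) atTop (𝓝 1) := by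
    have := (tendsto_const_nhds (x := (1:ℝ)) (f := (atTop : Filter ℕ))).sub
      tendsto_one_div_atTop_nhds_zero_nat
    simpa using this
  filter_upwards [hlim.eventually_const_lt (Phi_lt_one M), eventually_ge_atTop 2] with n hn h2
  have h3 : Phi M < Phi (aSeq n) := by rw [Phi_aSeq h2]; exact hn
  exact (Phi_strictMono.lt_iff_lt.1 h3).le

lemma integrableOn_mul_phi (x : ℝ) : IntegrableOn (fun u => u * phi u) (Ioi x) := by
  have h := (integrable_mul_exp_neg_mul_sq (by norm_num : (0:ℝ) < 1/2)).div_const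
    (Real.sqrt (2 * Real.pi))
  refine (h.congr (Eventually.of_forall fun u => ?_)).integrableOn
  rw [phi_eq]; ring

lemma tendsto_phi_atTop : Tendsto phi atTop (𝓝 0) := by
  have h1 : Tendsto (fun u : ℝ => -u ^ 2 / 2) atTop atBot := by
    have h2 : Tendsto (fun u : ℝ => u ^ 2) atTop atTop :=
      tendsto_pow_atTop two_ne_zero
    exact (tendsto_neg_atTop_atBot.comp h2).atBot_div_const (by norm_num)
  have h3 := Real.tendsto_exp_atBot.comp h1
  have h4 := h3.div_const (Real.sqrt (2 * Real.pi))
  rw [zero_div] at h4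
  exact h4.congr fun u => rfl

lemma integral_mul_phi (x : ℝ) : ∫ u in Ioi x, u * phi u = phi x := by
  have hderiv : ∀ y ∈ Ici x, HasDerivAt (fun u => -phi u) (y * phi y) y := by
    intro y _
    have h1 : HasDerivAt (fun u : ℝ => -u ^ 2 / 2) (-y) y := by
      have := ((hasDerivAt_pow 2 y).fun_neg).div_const 2
      refine this.congr_deriv ?_; push_cast; ring
    have h2 := (h1.exp.div_const (Real.sqrt (2 * Real.pi))).fun_neg
    have he : (fun u : ℝ => -(Real.exp (-u ^ 2 / 2) / Real.sqrt (2 * Real.pi)))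
        = fun u => -phi u := by
      funext u; rw [phi]
    rw [he] at h2
    refine h2.congr_deriv ?_
    rw [phi]; ring
  have htend : Tendsto (fun u => -phi u) atTop (𝓝 0) := by
    simpa using tendsto_phi_atTop.neg
  have := integral_Ioi_of_hasDerivAt_of_tendsto' hderiv (integrableOn_mul_phi x) htend
  rw [this]; ring

lemma T_le {x : ℝ} (hx : 0 < x) : T x ≤ phi x / x := by
  have hint : IntegrableOn (fun u => x⁻¹ * (u * phi u)) (Ioi x) :=
    (integrableOn_mul_phi x).const_mul _
  have h1 : T x ≤ ∫ u in Ioi x, x⁻¹ * (u * phi u) := by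
    refine setIntegral_mono_on integrable_phi.integrableOn hint measurableSet_Ioi
      fun u hu => ?_
    have hu' : x < u := hu
    have h3 : 1 ≤ x⁻¹ * u := by
      rw [inv_mul_eq_div, le_div_iff₀ hx]
      linarith
    nlinarith [phi_nonneg u]
  rw [integral_const_mul, integral_mul_phi] at h1
  rw [div_eq_inv_mul]; exact h1

lemma le_T {x δ : ℝ} (hx : 0 ≤ x) (hδ : 0 < δ) : δ * phi (x + δ) ≤ T x := by
  have h1 : ∫ u in Ioc x (x + δ), phi u ≤ T x :=
    setIntegral_mono_set integrable_phi.integrableOn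
      (Eventually.of_forall fun u => phi_nonneg u)
      (HasSubset.Subset.eventuallyLE Ioc_subset_Ioi_self)
  have h2 : δ * phi (x + δ) ≤ ∫ u in Ioc x (x + δ), phi u := by
    have hc : ∫ _ in Ioc x (x + δ), phi (x + δ) = δ * phi (x + δ) := by
      rw [setIntegral_const, measureReal_def, Real.volume_Ioc, smul_eq_mul]
      rw [ENNReal.toReal_ofReal (by linarith)]
      ring_nf
    rw [← hc]
    refine setIntegral_mono_on (integrableOn_const ?_)
      integrable_phi.integrableOn measurableSet_Ioc fun u hu => ?_
    · rw [Real.volume_Ioc]; exact ENNReal.ofReal_ne_top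
    · exact phi_anti (le_trans hx hu.1.le) hu.2
  linarith

lemma phi_div_phi (x y : ℝ) : phi x / phi y = Real.exp (y ^ 2 / 2 - x ^ 2 / 2) := by
  have h : phi x / phi y = Real.exp (-x ^ 2 / 2) / Real.exp (-y ^ 2 / 2) := by
    unfold phi
    rw [div_div_div_eq]
    rw [mul_comm (Real.exp (-x ^ 2 / 2)) (Real.sqrt (2 * Real.pi)),
      mul_div_mul_left _ _ sqrt_pos'.ne']
  rw [h, ← Real.exp_sub]
  congr 1; ring

lemma tendsto_nT_zero {s : ℝ} (hs : 0 < s) :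
    Tendsto (fun n : ℕ => (n : ℝ) * T (aSeq n + s)) atTop (𝓝 0) := by
  have hb : Tendsto (fun n : ℕ => (2 / s) * Real.exp (-(s / 2) * aSeq n - 3 / 8 * s ^ 2))
      atTop (𝓝 0) := by
    have he : Tendsto (fun a : ℝ => -(s / 2) * a - 3 / 8 * s ^ 2) atTop atBot := by
      rw [show (fun a : ℝ => -(s / 2) * a - 3 / 8 * s ^ 2)
          = fun a => -(s / 2) * a + -(3 / 8 * s ^ 2) by funext a; ring]
      exact tendsto_atBot_add_const_right _ _
        ((tendsto_const_mul_atBot_of_neg (show -(s/2) < 0 by linarith)).2 tendsto_id)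
    have := (Real.tendsto_exp_atBot.comp (he.comp tendsto_aSeq)).const_mul (2 / s)
    simpa [Function.comp] using this
  refine tendsto_of_tendsto_of_tendsto_of_le_of_le' tendsto_const_nhds hb
    (Eventually.of_forall fun n => mul_nonneg (Nat.cast_nonneg n) (T_pos _).le) ?_
  filter_upwards [eventually_ge_atTop 2, tendsto_aSeq.eventually_ge_atTop 1] with n h2 ha
  have hn0 : (0:ℝ) < n := by
    have : (2:ℝ) ≤ n := by exact_mod_cast h2
    linarith
  have hT : T (aSeq n) = 1 / n := T_aSeq h2
  have heq : (n : ℝ) * T (aSeq n + s) = T (aSeq n + s) / T (aSeq n) := by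
    rw [hT, div_div_eq_mul_div, div_one]; ring
  rw [heq]
  set a := aSeq n with hadef
  have h0a : 0 < a := by linarith
  -- lower bound on T a
  have hl : s / 2 * phi (a + s / 2) ≤ T a := le_T h0a.le (by linarith)
  -- upper bound on T (a+s)
  have h1 : T (a + s) ≤ phi (a + s) := by
    refine (T_le (by linarith : (0:ℝ) < a + s)).trans ?_
    rw [div_le_iff₀ (by linarith : (0:ℝ) < a + s)]
    nlinarith [phi_nonneg (a + s)]
  have h2' : T (a + s) / T a ≤ phi (a + s) / (s / 2 * phi (a + s / 2)) := by
    refine div_le_div₀ (phi_nonneg _) h1 ?_ hl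
    exact mul_pos (by linarith) (phi_pos _)
  refine h2'.trans ?_
  have hp : 0 < phi (a + s / 2) := phi_pos _
  have hre : phi (a + s) / (s / 2 * phi (a + s / 2))
      = (2 / s) * (phi (a + s) / phi (a + s / 2)) := by
    field_simp
  rw [hre, phi_div_phi]
  have harg : (a + s / 2) ^ 2 / 2 - (a + s) ^ 2 / 2 = -(s / 2) * a - 3 / 8 * s ^ 2 := by ring
  rw [harg]

lemma tendsto_nT_atTop {s : ℝ} (hs : s < 0) :
    Tendsto (fun n : ℕ => (n : ℝ) * T (aSeq n + s)) atTop atTop := by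
  have hb : Tendsto (fun n : ℕ => (-s / 2) * Real.exp (-(s / 2) * aSeq n - s ^ 2 / 8))
      atTop atTop := by
    have he : Tendsto (fun a : ℝ => -(s / 2) * a - s ^ 2 / 8) atTop atTop := by
      rw [show (fun a : ℝ => -(s / 2) * a - s ^ 2 / 8)
          = fun a => -(s / 2) * a + -(s ^ 2 / 8) by funext a; ring]
      exact tendsto_atTop_add_const_right _ _
        ((tendsto_const_mul_atTop_of_pos (show 0 < -(s/2) by linarith)).2 tendsto_id)
    have := (Real.tendsto_exp_atTop.comp (he.comp tendsto_aSeq)).const_mul_atTop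
      (show (0:ℝ) < -s / 2 by linarith)
    simpa [Function.comp] using this
  refine tendsto_atTop_mono' _ ?_ hb
  filter_upwards [eventually_ge_atTop 2, tendsto_aSeq.eventually_ge_atTop (1 - s)] with n h2 ha
  have h1a : 1 ≤ aSeq n + s := by linarith
  have hT : T (aSeq n) = 1 / n := T_aSeq h2
  have hn0 : (0:ℝ) < n := by
    have : (2:ℝ) ≤ n := by exact_mod_cast h2
    linarith
  have heq : (n : ℝ) * T (aSeq n + s) = T (aSeq n + s) / T (aSeq n) := by
    rw [hT, div_div_eq_mul_div, div_one]; ring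
  rw [heq]
  set a := aSeq n with hadef
  have h0a : (1:ℝ) ≤ a := by nlinarith
  have h0a' : (0:ℝ) < a := by linarith
  -- lower bound on T (a+s)
  have hl : (-s / 2) * phi (a + s / 2) ≤ T (a + s) := by
    have := le_T (show (0:ℝ) ≤ a + s by linarith) (show (0:ℝ) < -s / 2 by linarith)
    convert this using 2
    ring
  -- upper bound on T a
  have hu : T a ≤ phi a / a := T_le h0a'
  have hq : (-s / 2) * phi (a + s / 2) / (phi a / a) ≤ T (a + s) / T a :=
    div_le_div₀ (T_pos _).le hl (T_pos a) hu
  refine le_trans ?_ hq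
  have hp : 0 < phi a := phi_pos a
  have hre : (-s / 2) * phi (a + s / 2) / (phi a / a)
      = (-s / 2) * a * (phi (a + s / 2) / phi a) := by
    field_simp
  rw [hre, phi_div_phi]
  have harg : a ^ 2 / 2 - (a + s / 2) ^ 2 / 2 = -(s / 2) * a - s ^ 2 / 8 := by ring
  rw [harg]
  have hexp : 0 < Real.exp (-(s / 2) * a - s ^ 2 / 8) := Real.exp_pos _
  nlinarith [mul_nonneg (mul_nonneg (show (0:ℝ) ≤ -s / 2 by linarith) hexp.le)
    (show (0:ℝ) ≤ a - 1 by linarith)]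

lemma Phi_le_exp (x : ℝ) : Phi x ≤ Real.exp (-(T x)) := by
  have h := Real.add_one_le_exp (-(T x))
  have h2 : Phi x = 1 - T x := by linarith [Phi_add_T x]
  linarith

lemma tendsto_pow_zero {s : ℝ} (hs : s < 0) :
    Tendsto (fun n : ℕ => Phi (aSeq n + s) ^ n) atTop (𝓝 0) := by
  have hup : Tendsto (fun n : ℕ => Real.exp (-((n : ℝ) * T (aSeq n + s)))) atTop (𝓝 0) :=
    Real.tendsto_exp_atBot.comp (tendsto_neg_atTop_atBot.comp (tendsto_nT_atTop hs))
  refine tendsto_of_tendsto_of_tendsto_of_le_of_le' tendsto_const_nhds hup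
    (Eventually.of_forall fun n => pow_nonneg (Phi_pos _).le n)
    (Eventually.of_forall fun n => ?_)
  calc Phi (aSeq n + s) ^ n ≤ Real.exp (-(T (aSeq n + s))) ^ n :=
        pow_le_pow_left₀ (Phi_pos _).le (Phi_le_exp _) n
    _ = Real.exp (-((n : ℝ) * T (aSeq n + s))) := by
        rw [← Real.exp_nat_mul]; congr 1; ring

lemma T_le_one (x : ℝ) : T x ≤ 1 := by linarith [Phi_add_T x, Phi_pos x]

lemma tendsto_pow_one {s : ℝ} (hs : 0 < s) :
    Tendsto (fun n : ℕ => Phi (aSeq n + s) ^ n) atTop (𝓝 1) := by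
  have hlow : Tendsto (fun n : ℕ => 1 - (n : ℝ) * T (aSeq n + s)) atTop (𝓝 1) := by
    have := (tendsto_const_nhds (x := (1:ℝ)) (f := (atTop : Filter ℕ))).sub
      (tendsto_nT_zero hs)
    simpa using this
  refine tendsto_of_tendsto_of_tendsto_of_le_of_le' hlow tendsto_const_nhds
    (Eventually.of_forall fun n => ?_)
    (Eventually.of_forall fun n => pow_le_one₀ (Phi_pos _).le (Phi_le_one _))
  have hB := one_add_mul_le_pow (show (-2:ℝ) ≤ -(T (aSeq n + s)) by
    linarith [T_le_one (aSeq n + s)]) n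
  have h2 : Phi (aSeq n + s) = 1 + -(T (aSeq n + s)) := by linarith [Phi_add_T (aSeq n + s)]
  rw [h2]
  calc 1 - (n : ℝ) * T (aSeq n + s) = 1 + (n : ℝ) * -(T (aSeq n + s)) := by ring
    _ ≤ (1 + -(T (aSeq n + s))) ^ n := hB

lemma tendsto_pow_ind {x k t : ℝ} (ht : 0 < t) (hx : x ≠ k) :
    Tendsto (fun n : ℕ => Phi (aSeq n + t * (x - k)) ^ n) atTop
      (𝓝 (Set.indicator {y : ℝ | k < y} (fun _ => (1:ℝ)) x)) := by
  rcases lt_or_gt_of_ne hx with h | h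
  · have hs : t * (x - k) < 0 := by nlinarith
    have hind : Set.indicator {y : ℝ | k < y} (fun _ => (1:ℝ)) x = 0 := by
      simp [Set.indicator_apply, not_lt.2 h.le]
    rw [hind]
    exact tendsto_pow_zero hs
  · have hs : 0 < t * (x - k) := by nlinarith
    have hind : Set.indicator {y : ℝ | k < y} (fun _ => (1:ℝ)) x = 1 := by
      simp [Set.indicator_apply, h]
    rw [hind]
    exact tendsto_pow_one hs

end StdGauss

open StdGauss

theorem stmt2 {Ω : Type*} [MeasureSpace Ω] [IsProbabilityMeasure (ℙ : Measure Ω)]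
    (X : Ω → ℝ) (hX : Measurable X) (t k : ℝ) (ht : 0 < t)
    (hk : (ℙ : Measure Ω) {ω | X ω = k} = 0) :
    Tendsto (fun n : ℕ => ∫ ω, (Phi (aSeq n + t * (X ω - k))) ^ n ∂(ℙ : Measure Ω))
      atTop (nhds (((ℙ : Measure Ω) {ω | k < X ω}).toReal)) := by
  have hmeas : MeasurableSet {ω | k < X ω} := measurableSet_lt measurable_const hX
  have hint : ((ℙ : Measure Ω) {ω | k < X ω}).toReal
      = ∫ ω, Set.indicator {y : ℝ | k < y} (fun _ => (1:ℝ)) (X ω) ∂(ℙ : Measure Ω) := by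
    have hcomp : (fun ω => Set.indicator {y : ℝ | k < y} (fun _ => (1:ℝ)) (X ω))
        = Set.indicator {ω | k < X ω} (fun _ => (1:ℝ)) := by
      funext ω; by_cases h : k < X ω <;> simp [Set.indicator_apply, h]
    rw [hcomp, integral_indicator_const _ hmeas]
    simp [measureReal_def]
  rw [hint]
  refine tendsto_integral_of_dominated_convergence (fun _ => (1:ℝ)) ?_ (integrable_const 1)
    ?_ ?_
  · intro n
    exact ((continuous_Phi.measurable.comp
      (((hX.sub_const k).const_mul t).const_add (aSeq n))).pow_const n).aestronglyMeasurable
  · intro n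
    refine Eventually.of_forall fun ω => ?_
    rw [Real.norm_eq_abs, abs_of_nonneg (pow_nonneg (Phi_pos _).le n)]
    exact pow_le_one₀ (Phi_pos _).le (Phi_le_one _)
  · have hae : ∀ᵐ ω ∂(ℙ : Measure Ω), X ω ≠ k := by
      rw [ae_iff]
      simpa using hk
    filter_upwards [hae] with ω hω
    exact tendsto_pow_ind ht hω
end

section
/- Define the cutoff c_n(α, ρ) = √(1-ρ)·Φ⁻¹(1 - 1/n) - √ρ·Φ⁻¹(α). Then under the global null in the equicorrelated Gaussian model, FWER(n, α, ρ) = 1 - E_Z[Φ^n((c_n(α,ρ) + √ρ Z)/√(1-ρ))] (Z standard normal) converges to α as n → ∞, for every α ∈ (0,1) and ρ ∈ (0,1). -/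
open Filter MeasureTheory ProbabilityTheory

/-- The cutoff c_n(α, ρ) = √(1-ρ)·Φ⁻¹(1-1/n) - √ρ·Φ⁻¹(α). -/
noncomputable def cutoff (n : ℕ) (α ρ : ℝ) : ℝ :=
  Real.sqrt (1 - ρ) * PhiInv (1 - 1 / n) - Real.sqrt ρ * PhiInv α

lemma pdf_eq : (fun t : ℝ => Real.exp (-t ^ 2 / 2) / Real.sqrt (2 * Real.pi))
    = gaussianPDFReal 0 1 := by
  ext t
  simp [gaussianPDFReal]
  ring_nf

lemma Phi_eq (x : ℝ) : Phi x = ∫ t in Set.Iic x, gaussianPDFReal 0 1 t := by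
  rw [Phi, pdf_eq]

lemma integrable_pdf : Integrable (gaussianPDFReal 0 1) := integrable_gaussianPDFReal 0 1

lemma pdf_pos (x : ℝ) : 0 < gaussianPDFReal 0 1 x := gaussianPDFReal_pos 0 1 x one_ne_zero

lemma Phi_mono : Monotone Phi := by
  intro a b hab
  rw [Phi_eq, Phi_eq]
  exact setIntegral_mono_set integrable_pdf.integrableOn
    (ae_of_all _ fun x => (pdf_pos x).le) (HasSubset.Subset.eventuallyLE (Set.Iic_subset_Iic.mpr hab))

lemma Phi_strictMono : StrictMono Phi := by
  intro a b hab
  have h1 : Phi b - Phi a = ∫ t in Set.Ioc a b, gaussianPDFReal 0 1 t := by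
    have := setIntegral_union (f := gaussianPDFReal 0 1) (μ := volume)
      (s := Set.Iic a) (t := Set.Ioc a b)
      (by rw [Set.disjoint_iff_inter_eq_empty]; ext x; simp; intro h1 h2; linarith)
      measurableSet_Ioc integrable_pdf.integrableOn integrable_pdf.integrableOn
    rw [Set.Iic_union_Ioc_eq_Iic hab.le] at this
    rw [Phi_eq, Phi_eq, this]; ring
  have h2 : 0 < ∫ t in Set.Ioc a b, gaussianPDFReal 0 1 t := by
    refine setIntegral_pos_iff_support_of_nonneg_ae ?_ integrable_pdf.integrableOn |>.mpr ?_
    · exact ae_of_all _ fun x => (pdf_pos x).le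
    · have : Function.support (gaussianPDFReal 0 1) = Set.univ := by
        ext x; simp [Function.support, (pdf_pos x).ne']
      rw [this, Set.univ_inter]
      simp [hab]
  linarith

lemma pdf_le_one (t : ℝ) : gaussianPDFReal 0 1 t ≤ 1 := by
  rw [← pdf_eq]
  have h1 : Real.exp (-t ^ 2 / 2) ≤ 1 := by
    rw [Real.exp_le_one_iff]
    nlinarith [sq_nonneg t]
  have h2 : (1:ℝ) ≤ Real.sqrt (2 * Real.pi) := by
    rw [show (1:ℝ) = Real.sqrt 1 by simp]
    apply Real.sqrt_le_sqrt
    nlinarith [Real.pi_gt_three]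
  calc Real.exp (-t ^ 2 / 2) / Real.sqrt (2 * Real.pi) ≤ 1 / 1 :=
        div_le_div₀ zero_le_one h1 one_pos h2
      _ = 1 := by norm_num

lemma Phi_sub_Phi {a b : ℝ} (hab : a ≤ b) :
    Phi b - Phi a = ∫ t in Set.Ioc a b, gaussianPDFReal 0 1 t := by
  have := setIntegral_union (f := gaussianPDFReal 0 1) (μ := volume)
    (s := Set.Iic a) (t := Set.Ioc a b)
    (by rw [Set.disjoint_iff_inter_eq_empty]; ext x; simp; intro h1 h2; linarith)
    measurableSet_Ioc integrable_pdf.integrableOn integrable_pdf.integrableOn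
  rw [Set.Iic_union_Ioc_eq_Iic hab] at this
  rw [Phi_eq, Phi_eq, this]; ring

lemma Phi_lipschitz : LipschitzWith 1 Phi := by
  apply LipschitzWith.of_dist_le_mul
  intro x y
  wlog h : y ≤ x generalizing x y
  · rw [dist_comm, dist_comm x y]; exact this y x (le_of_not_ge h)
  rw [Real.dist_eq, Real.dist_eq, abs_of_nonneg (sub_nonneg.mpr (Phi_mono h)),
    abs_of_nonneg (sub_nonneg.mpr h), Phi_sub_Phi h, NNReal.coe_one, one_mul]
  calc ∫ t in Set.Ioc y x, gaussianPDFReal 0 1 t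
      ≤ ∫ _ in Set.Ioc y x, (1:ℝ) := by
        apply setIntegral_mono_on integrable_pdf.integrableOn (by simp)
          measurableSet_Ioc fun t _ => pdf_le_one t
    _ = x - y := by simp [Real.volume_Ioc, ENNReal.toReal_ofReal (sub_nonneg.mpr h), h]

lemma Phi_continuous : Continuous Phi := Phi_lipschitz.continuous

lemma Phi_nat_tendsto : Tendsto (fun n : ℕ => Phi n) atTop (nhds 1) := by
  have h := tendsto_setIntegral_of_monotone (μ := volume) (f := gaussianPDFReal 0 1)
    (s := fun n : ℕ => Set.Iic (n : ℝ)) (fun n => measurableSet_Iic)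
    (fun a b hab => Set.Iic_subset_Iic.mpr (by exact_mod_cast hab))
    (integrable_pdf.integrableOn)
  have hU : (⋃ n : ℕ, Set.Iic (n : ℝ)) = Set.univ := by
    ext x; simp only [Set.mem_iUnion, Set.mem_Iic, Set.mem_univ, iff_true]
    obtain ⟨n, hn⟩ := exists_nat_ge x
    exact ⟨n, hn⟩
  rw [hU] at h
  simp only [Measure.restrict_univ] at h
  rw [integral_gaussianPDFReal_eq_one 0 one_ne_zero] at h
  convert h using 2 with n
  rw [Phi_eq]

lemma Phi_le_one (x : ℝ) : Phi x ≤ 1 := by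
  by_contra hc
  push_neg at hc
  have h := Phi_nat_tendsto
  obtain ⟨n, hn⟩ := exists_nat_ge x
  have h2 : ∀ m : ℕ, n ≤ m → Phi x ≤ Phi m := fun m hm =>
    Phi_mono (hn.trans (by exact_mod_cast hm))
  have := ge_of_tendsto' (h.comp (tendsto_add_atTop_nat n)) (fun m =>
    h2 (m + n) (by omega))
  linarith

lemma Phi_tendsto_atTop : Tendsto Phi atTop (nhds 1) := by
  rcases tendsto_of_monotone Phi_mono with h | ⟨l, hl⟩
  · exfalso
    obtain ⟨x, hx⟩ := (h.eventually_gt_atTop 2).exists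
    linarith [Phi_le_one x]
  · have h2 : Tendsto (fun n : ℕ => Phi n) atTop (nhds l) :=
      hl.comp tendsto_natCast_atTop_atTop
    rwa [tendsto_nhds_unique h2 Phi_nat_tendsto] at hl

lemma Phi_neg_nat_tendsto : Tendsto (fun n : ℕ => Phi (-n)) atTop (nhds 0) := by
  have h := tendsto_setIntegral_of_antitone (μ := volume) (f := gaussianPDFReal 0 1)
    (s := fun n : ℕ => Set.Iic (-(n : ℝ))) (fun n => measurableSet_Iic)
    (fun a b hab => Set.Iic_subset_Iic.mpr (by exact_mod_cast neg_le_neg (by exact_mod_cast hab)))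
    ⟨0, integrable_pdf.integrableOn⟩
  have hI : (⋂ n : ℕ, Set.Iic (-(n : ℝ))) = ∅ := by
    ext x
    simp only [Set.mem_iInter, Set.mem_Iic, Set.mem_empty_iff_false, iff_false, not_forall, not_le]
    obtain ⟨n, hn⟩ := exists_nat_gt (-x)
    exact ⟨n, by linarith⟩
  rw [hI] at h
  simpa only [Measure.restrict_empty, integral_zero_measure, Phi_eq] using h

lemma Phi_tendsto_atBot : Tendsto Phi atBot (nhds 0) := by
  have hmono : Monotone (fun x => -Phi (-x)) := fun a b hab => by
    simp only [neg_le_neg_iff]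
    exact Phi_mono (neg_le_neg hab)
  rcases tendsto_of_monotone hmono with h | ⟨l, hl⟩
  · exfalso
    obtain ⟨x, hx⟩ := (h.eventually_gt_atTop 1).exists
    have h0 : 0 ≤ Phi (-x) := by
      rw [Phi_eq]
      exact setIntegral_nonneg measurableSet_Iic fun t _ => (pdf_pos t).le
    have h1 : Phi (-x) ≤ 1 := Phi_le_one _
    have : (1:ℝ) < -Phi (-x) := hx
    linarith
  · have h2 : Tendsto (fun n : ℕ => -Phi (-(n:ℝ))) atTop (nhds l) :=
      hl.comp tendsto_natCast_atTop_atTop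
    have h3 : Tendsto (fun n : ℕ => -Phi (-(n:ℝ))) atTop (nhds 0) := by
      simpa using Phi_neg_nat_tendsto.neg
    rw [tendsto_nhds_unique h2 h3] at hl
    have := hl.comp tendsto_neg_atBot_atTop
    simpa using this.neg

lemma Phi_pos (x : ℝ) : 0 < Phi x := by
  obtain ⟨y, hy1, hy2⟩ : ∃ y, y < x ∧ Phi y < Phi x := ⟨x - 1, by linarith, Phi_strictMono (by linarith)⟩
  have h0 : 0 ≤ Phi y := by
    rw [Phi_eq]
    exact setIntegral_nonneg measurableSet_Iic fun t _ => (pdf_pos t).le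
  linarith

lemma Phi_lt_one (x : ℝ) : Phi x < 1 := by
  by_contra hc
  push_neg at hc
  have h1 : Phi (x + 1) ≤ 1 := Phi_le_one _
  have := Phi_strictMono (show x < x + 1 by linarith)
  linarith

lemma Phi_surj {p : ℝ} (hp : p ∈ Set.Ioo (0:ℝ) 1) : ∃ x, Phi x = p := by
  obtain ⟨a, ha⟩ := (Phi_tendsto_atBot.eventually_lt_const hp.1).exists
  obtain ⟨b, hb⟩ := (Phi_tendsto_atTop.eventually_const_lt hp.2).exists
  have hab : a ≤ b := by
    by_contra hc
    push_neg at hc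
    have := Phi_strictMono hc
    linarith
  obtain ⟨x, _, hx⟩ := intermediate_value_Icc hab Phi_continuous.continuousOn
    ⟨ha.le, hb.le⟩
  exact ⟨x, hx⟩

lemma Phi_PhiInv {p : ℝ} (hp : p ∈ Set.Ioo (0:ℝ) 1) : Phi (PhiInv p) = p :=
  Function.invFun_eq (Phi_surj hp)

lemma one_sub_Phi (x : ℝ) : 1 - Phi x = ∫ t in Set.Ioi x, gaussianPDFReal 0 1 t := by
  have h := intervalIntegral.integral_Iic_add_Ioi (μ := volume) (f := gaussianPDFReal 0 1) (b := x)
    integrable_pdf.integrableOn integrable_pdf.integrableOn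
  rw [integral_gaussianPDFReal_eq_one 0 one_ne_zero] at h
  rw [Phi_eq]
  linarith

lemma pdf_add_le {u t : ℝ} (hu : 0 ≤ u) (ht : 0 < t) {s : ℝ} (hs : u ≤ s) :
    gaussianPDFReal 0 1 (s + t) ≤ Real.exp (-(u * t)) * gaussianPDFReal 0 1 s := by
  rw [← pdf_eq]
  simp only
  rw [mul_div_assoc']
  gcongr
  rw [← Real.exp_add]
  apply Real.exp_le_exp.mpr
  nlinarith [sq_nonneg t, mul_le_mul_of_nonneg_right hs ht.le]

lemma tail_le {u t : ℝ} (hu : 0 ≤ u) (ht : 0 < t) :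
    1 - Phi (u + t) ≤ Real.exp (-(u * t)) * (1 - Phi u) := by
  rw [one_sub_Phi, one_sub_Phi]
  have himg : (fun s => s + t) '' Set.Ioi u = Set.Ioi (u + t) := by
    ext x; simp only [Set.mem_image, Set.mem_Ioi]
    constructor
    · rintro ⟨y, hy, rfl⟩; linarith
    · intro hx; exact ⟨x - t, by linarith, by ring⟩
  have hmp : MeasurePreserving (fun s : ℝ => s + t) volume volume :=
    measurePreserving_add_right volume t
  have hemb : MeasurableEmbedding (fun s : ℝ => s + t) :=
    (Homeomorph.addRight t).measurableEmbedding
  rw [← himg, hmp.setIntegral_image_emb hemb]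
  rw [← integral_const_mul]
  apply setIntegral_mono_on
  · exact (integrable_pdf.comp_add_right t).integrableOn
  · exact (integrable_pdf.const_mul _).integrableOn
  · exact measurableSet_Ioi
  · intro s hs
    exact pdf_add_le hu ht (le_of_lt hs)

noncomputable def uN (n : ℕ) : ℝ := PhiInv (1 - 1/n)

lemma uN_spec {n : ℕ} (hn : 2 ≤ n) : Phi (uN n) = 1 - 1/n := by
  apply Phi_PhiInv
  constructor
  · have : (1:ℝ)/n ≤ 1/2 := by
      apply div_le_div_of_nonneg_left one_pos.le two_pos
      exact_mod_cast hn
    linarith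
  · have : (0:ℝ) < 1/n := by positivity
    linarith

lemma uN_tendsto : Tendsto uN atTop atTop := by
  rw [tendsto_atTop_atTop]
  intro M
  have h1 : Tendsto (fun n : ℕ => 1 - 1/(n:ℝ)) atTop (nhds 1) := by
    have : Tendsto (fun n : ℕ => 1/(n:ℝ)) atTop (nhds 0) := tendsto_one_div_atTop_nhds_zero_nat
    simpa using tendsto_const_nhds.sub this
  obtain ⟨N, hN⟩ := (h1.eventually_const_lt (Phi_lt_one M)).exists_forall_of_atTop
  refine ⟨max N 2, fun n hn => ?_⟩
  have h2 : Phi M < Phi (uN n) := by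
    rw [uN_spec (le_trans (le_max_right N 2) hn)]
    exact hN n (le_trans (le_max_left N 2) hn)
  by_contra hc
  push_neg at hc
  exact absurd (Phi_mono hc.le) (not_le.mpr h2)

lemma pow_tendsto_one {t : ℝ} (ht : 0 < t) :
    Tendsto (fun n : ℕ => Phi (uN n + t) ^ n) atTop (nhds 1) := by
  have hna : Tendsto (fun n : ℕ => n * (1 - Phi (uN n + t))) atTop (nhds 0) := by
    have hub : ∀ᶠ n : ℕ in atTop, n * (1 - Phi (uN n + t)) ≤ Real.exp (-(uN n * t)) := by
      filter_upwards [uN_tendsto.eventually_ge_atTop 0, eventually_ge_atTop 2] with n h0 h2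
      have := tail_le (u := uN n) h0 ht
      have hspec : 1 - Phi (uN n) = 1/n := by rw [uN_spec h2]; ring
      rw [hspec] at this
      calc (n:ℝ) * (1 - Phi (uN n + t)) ≤ n * (Real.exp (-(uN n * t)) * (1/n)) := by
            apply mul_le_mul_of_nonneg_left this (by positivity)
        _ = Real.exp (-(uN n * t)) := by
            field_simp
      
    have hexp : Tendsto (fun n : ℕ => Real.exp (-(uN n * t))) atTop (nhds 0) := by
      apply Real.tendsto_exp_atBot.comp
      apply tendsto_neg_atTop_atBot.comp
      exact uN_tendsto.atTop_mul_const ht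
    have hlb : ∀ n : ℕ, 0 ≤ (n:ℝ) * (1 - Phi (uN n + t)) := fun n =>
      mul_nonneg n.cast_nonneg (by linarith [Phi_le_one (uN n + t)])
    exact squeeze_zero' (Eventually.of_forall hlb) hub hexp
  have hub : ∀ n : ℕ, Phi (uN n + t) ^ n ≤ 1 := fun n =>
    pow_le_one₀ (Phi_pos _).le (Phi_le_one _)
  have hlb : ∀ n : ℕ, 1 - n * (1 - Phi (uN n + t)) ≤ Phi (uN n + t) ^ n := fun n => by
    have h := one_add_mul_le_pow (a := -(1 - Phi (uN n + t))) (by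
      have := Phi_pos (uN n + t); have := Phi_le_one (uN n + t); linarith) n
    calc 1 - n * (1 - Phi (uN n + t)) = 1 + n * -(1 - Phi (uN n + t)) := by ring
      _ ≤ (1 + -(1 - Phi (uN n + t))) ^ n := h
      _ = Phi (uN n + t) ^ n := by ring_nf
  have h1 : Tendsto (fun n : ℕ => 1 - n * (1 - Phi (uN n + t))) atTop (nhds 1) := by
    simpa using tendsto_const_nhds.sub hna
  exact tendsto_of_tendsto_of_tendsto_of_le_of_le h1 tendsto_const_nhds hlb hub

lemma pow_tendsto_zero {t : ℝ} (ht : t < 0) :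
    Tendsto (fun n : ℕ => Phi (uN n + t) ^ n) atTop (nhds 0) := by
  have hinf : Tendsto (fun n : ℕ => (n:ℝ) * (1 - Phi (uN n + t))) atTop atTop := by
    have hgrow : Tendsto (fun n : ℕ => Real.exp ((uN n + t) * -t)) atTop atTop := by
      apply Real.tendsto_exp_atTop.comp
      apply Tendsto.atTop_mul_const (neg_pos.mpr ht)
      exact tendsto_atTop_add_const_right _ t uN_tendsto
    apply tendsto_atTop_mono' atTop ?_ hgrow
    filter_upwards [uN_tendsto.eventually_ge_atTop (-t), eventually_ge_atTop 2] with n h0 h2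
    have h0' : 0 ≤ uN n + t := by linarith
    have := tail_le (u := uN n + t) h0' (neg_pos.mpr ht)
    rw [show uN n + t + -t = uN n by ring] at this
    have hspec : 1 - Phi (uN n) = 1/n := by rw [uN_spec h2]; ring
    rw [hspec] at this
    have hposn : (0:ℝ) < n := by positivity
    have hkey : Real.exp ((uN n + t) * -t) * (1/n) ≤ 1 - Phi (uN n + t) := by
      rw [Real.exp_neg] at this
      calc Real.exp ((uN n + t) * -t) * (1/n)
          ≤ Real.exp ((uN n + t) * -t) * ((Real.exp ((uN n + t) * -t))⁻¹ * (1 - Phi (uN n + t))) :=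
            mul_le_mul_of_nonneg_left this (Real.exp_pos _).le
        _ = 1 - Phi (uN n + t) := by
            rw [← mul_assoc, mul_inv_cancel₀ (Real.exp_pos _).ne', one_mul]
    calc Real.exp ((uN n + t) * -t) = n * (Real.exp ((uN n + t) * -t) * (1/n)) := by
          field_simp
      _ ≤ n * (1 - Phi (uN n + t)) := by
          apply mul_le_mul_of_nonneg_left hkey hposn.le
  have hub : ∀ n : ℕ, Phi (uN n + t) ^ n ≤ Real.exp (-((n:ℝ) * (1 - Phi (uN n + t)))) := by
    intro n
    calc Phi (uN n + t) ^ n ≤ Real.exp (-(1 - Phi (uN n + t))) ^ n := by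
          apply pow_le_pow_left₀ (Phi_pos _).le
          linarith [Real.add_one_le_exp (-(1 - Phi (uN n + t)))]
      _ = Real.exp (-((n:ℝ) * (1 - Phi (uN n + t)))) := by
          rw [← Real.exp_nat_mul]; ring_nf
  have hexp : Tendsto (fun n : ℕ => Real.exp (-((n:ℝ) * (1 - Phi (uN n + t))))) atTop (nhds 0) :=
    Real.tendsto_exp_atBot.comp (tendsto_neg_atTop_atBot.comp hinf)
  exact squeeze_zero' (Eventually.of_forall fun n => pow_nonneg (Phi_pos _).le n)
    (Eventually.of_forall hub) hexp

theorem stmt3 (α ρ : ℝ) (hα : α ∈ Set.Ioo (0 : ℝ) 1) (hρ : ρ ∈ Set.Ioo (0 : ℝ) 1) :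
    Tendsto (fun n : ℕ =>
        1 - ∫ z, (Phi ((cutoff n α ρ + Real.sqrt ρ * z) / Real.sqrt (1 - ρ))) ^ n
            ∂(gaussianReal 0 1))
      atTop (nhds α) := by
  set q := PhiInv α with hqdef
  have hq : Phi q = α := Phi_PhiInv hα
  have h1ρ : 0 < 1 - ρ := by linarith [hρ.2]
  have hsq : 0 < Real.sqrt (1 - ρ) := Real.sqrt_pos.mpr h1ρ
  have hsρ : 0 < Real.sqrt ρ := Real.sqrt_pos.mpr hρ.1
  have harg : ∀ n : ℕ, ∀ z : ℝ,
      (cutoff n α ρ + Real.sqrt ρ * z) / Real.sqrt (1 - ρ)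
        = uN n + Real.sqrt ρ * (z - q) / Real.sqrt (1 - ρ) := by
    intro n z
    rw [cutoff, ← hqdef]
    have : uN n = PhiInv (1 - 1/n) := rfl
    rw [← this]
    field_simp
    ring
  have hγ : (gaussianReal 0 1) (Set.Ioi q) = ENNReal.ofReal (1 - α) := by
    rw [gaussianReal_apply_eq_integral 0 one_ne_zero, ← one_sub_Phi, hq]
  have hI : Tendsto (fun n : ℕ =>
      ∫ z, (Phi ((cutoff n α ρ + Real.sqrt ρ * z) / Real.sqrt (1 - ρ))) ^ n
        ∂(gaussianReal 0 1)) atTop (nhds (1 - α)) := by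
    have hdct := tendsto_integral_of_dominated_convergence (μ := gaussianReal 0 1)
      (F := fun (n : ℕ) (z : ℝ) =>
        (Phi ((cutoff n α ρ + Real.sqrt ρ * z) / Real.sqrt (1 - ρ))) ^ n)
      (f := Set.indicator (Set.Ioi q) (fun _ => (1:ℝ)))
      (bound := fun _ => (1:ℝ))
      (fun n => ((Phi_continuous.comp (by continuity)).pow n).aestronglyMeasurable)
      (integrable_const 1)
      (fun n => Eventually.of_forall fun z => by
        rw [Real.norm_eq_abs, abs_of_nonneg (pow_nonneg (Phi_pos _).le n)]
        exact pow_le_one₀ (Phi_pos _).le (Phi_le_one _))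
      ?_
    · have hval : ∫ z, Set.indicator (Set.Ioi q) (fun _ => (1:ℝ)) z ∂(gaussianReal 0 1)
          = 1 - α := by
        rw [integral_indicator_const (1:ℝ) measurableSet_Ioi, measureReal_def, hγ, smul_eq_mul, mul_one,
          ENNReal.toReal_ofReal (by linarith [hα.2])]
      rwa [hval] at hdct
    · have hq0 : (gaussianReal 0 1) {q} = 0 :=
        gaussianReal_absolutelyContinuous 0 one_ne_zero (measure_singleton q)
      have hae : ∀ᵐ z ∂(gaussianReal 0 1), z ≠ q := by
        rw [ae_iff]
        convert hq0 using 2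
        ext z; simp
      filter_upwards [hae] with z hz
      rcases lt_or_gt_of_ne hz with hlt | hgt
      · have ht : Real.sqrt ρ * (z - q) / Real.sqrt (1 - ρ) < 0 := by
          apply div_neg_of_neg_of_pos _ hsq
          exact mul_neg_of_pos_of_neg hsρ (by linarith)
        have := pow_tendsto_zero ht
        rw [Set.indicator_of_notMem (by simp [hlt.not_gt])]
        convert this using 2 with n
        rw [harg n z]
      · have ht : 0 < Real.sqrt ρ * (z - q) / Real.sqrt (1 - ρ) := by
          apply div_pos _ hsq
          exact mul_pos hsρ (by linarith)
        have := pow_tendsto_one ht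
        rw [Set.indicator_of_mem (by simpa using hgt)]
        convert this using 2 with n
        rw [harg n z]
  have := tendsto_const_nhds (x := (1:ℝ)) (f := atTop (α := ℕ)) |>.sub hI
  simpa using this
end

section
/- Let a_n = Φ⁻¹(1-1/n). Then a_n² = 2 log n - log log n - log(4π) + o(1) as n → ∞. -/
open Filter MeasureTheory Set

namespace Stmt9

noncomputable def phi (t : ℝ) : ℝ := Real.exp (-t ^ 2 / 2) / Real.sqrt (2 * Real.pi)

lemma phi_pos (t : ℝ) : 0 < phi t :=
  div_pos (Real.exp_pos _) (Real.sqrt_pos.2 (by positivity))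

lemma phi_cont : Continuous phi := by
  unfold phi; fun_prop

lemma integrable_phi : Integrable phi := by
  have h : Integrable (fun t : ℝ => Real.exp (-(1/2) * t ^ 2)) := integrable_exp_neg_mul_sq (by norm_num)
  have := h.div_const (Real.sqrt (2 * Real.pi))
  refine this.congr (Eventually.of_forall fun t => ?_)
  unfold phi; ring_nf

lemma integral_phi : ∫ t, phi t = 1 := by
  unfold phi
  rw [integral_div]
  have h : ∫ t : ℝ, Real.exp (-t ^ 2 / 2) = Real.sqrt (2 * Real.pi) := by
    have h2 := integral_gaussian (1/2)
    have e1 : ∀ t : ℝ, -t ^ 2 / 2 = -(1/2) * t ^ 2 := fun t => by ring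
    simp only [e1, h2]
    rw [show Real.pi / (1/2) = 2 * Real.pi by ring]
  rw [h, div_self (by positivity)]

noncomputable def T (x : ℝ) : ℝ := ∫ t in Set.Ioi x, phi t

lemma Phi_eq (x : ℝ) : Phi x = ∫ t in Set.Iic x, phi t := rfl

lemma Phi_add_T (x : ℝ) : Phi x + T x = 1 := by
  rw [Phi_eq, T, intervalIntegral.integral_Iic_add_Ioi integrable_phi.integrableOn integrable_phi.integrableOn,
    integral_phi]

lemma T_pos (x : ℝ) : 0 < T x := by
  rw [T]
  refine (setIntegral_pos_iff_support_of_nonneg_ae ?_ integrable_phi.integrableOn).2 ?_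
  · exact Eventually.of_forall fun t => (phi_pos t).le
  · have : Function.support phi = Set.univ := by
      ext t; simp [Function.mem_support, (phi_pos t).ne']
    rw [this, Set.univ_inter]
    simp [Real.volume_Ioi]

lemma Phi_pos (x : ℝ) : 0 < Phi x := by
  have h : Phi x - Phi (x-1) = ∫ t in (x-1)..x, phi t := by
    rw [Phi_eq, Phi_eq, intervalIntegral.integral_Iic_sub_Iic integrable_phi.integrableOn
      integrable_phi.integrableOn]
  have hpos : 0 < ∫ t in (x-1)..x, phi t :=
    intervalIntegral.intervalIntegral_pos_of_pos (integrable_phi.intervalIntegrable) phi_pos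
      (by linarith)
  have h0 : 0 ≤ Phi (x-1) := by
    rw [Phi_eq]
    exact setIntegral_nonneg measurableSet_Iic fun t _ => (phi_pos t).le
  linarith

lemma Phi_strictMono : StrictMono Phi := by
  intro a b hab
  have h : Phi b - Phi a = ∫ t in a..b, phi t := by
    rw [Phi_eq, Phi_eq, intervalIntegral.integral_Iic_sub_Iic integrable_phi.integrableOn integrable_phi.integrableOn]
  have hpos : 0 < ∫ t in a..b, phi t :=
    intervalIntegral.intervalIntegral_pos_of_pos (integrable_phi.intervalIntegrable) phi_pos hab
  linarith

lemma Phi_lt_one (x : ℝ) : Phi x < 1 := by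
  have := Phi_add_T x; have := T_pos x; linarith

lemma Phi_continuous : Continuous Phi := by
  have h : ∀ x, Phi x = Phi 0 + ∫ t in (0:ℝ)..x, phi t := by
    intro x
    rw [Phi_eq, Phi_eq, ← intervalIntegral.integral_Iic_sub_Iic integrable_phi.integrableOn integrable_phi.integrableOn]
    ring
  rw [show Phi = fun x => Phi 0 + ∫ t in (0:ℝ)..x, phi t from funext h]
  exact continuous_const.add
    (intervalIntegral.continuous_primitive (fun a b => integrable_phi.intervalIntegrable) 0)

lemma hasDerivAt_phi (t : ℝ) : HasDerivAt phi (-t * phi t) t := by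
  have h1 : HasDerivAt (fun t : ℝ => -t ^ 2 / 2) (-t) t := by
    have := ((hasDerivAt_pow 2 t).neg).div_const 2
    simpa using this.congr_deriv (by ring)
  have h2 : HasDerivAt (fun t : ℝ => Real.exp (-t ^ 2 / 2)) (Real.exp (-t ^ 2 / 2) * (-t)) t :=
    h1.exp
  have h3 := h2.div_const (Real.sqrt (2 * Real.pi))
  unfold phi
  refine h3.congr_deriv ?_
  ring

lemma tendsto_phi_atTop : Tendsto phi atTop (nhds 0) := by
  have h1 : Tendsto (fun t : ℝ => -t ^ 2 / 2) atTop atBot := by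
    apply Tendsto.atBot_div_const (by norm_num)
    exact tendsto_neg_atTop_atBot.comp (tendsto_pow_atTop (by norm_num))
  have h2 : Tendsto (fun t : ℝ => Real.exp (-t ^ 2 / 2)) atTop (nhds 0) :=
    Real.tendsto_exp_atBot.comp h1
  have h3 := h2.div_const (Real.sqrt (2 * Real.pi))
  rw [zero_div] at h3
  exact h3

lemma aesm_aux {x : ℝ} (f : ℝ → ℝ) (hf : ContinuousOn f (Set.Ioi x)) :
    AEStronglyMeasurable f (volume.restrict (Set.Ioi x)) :=
  hf.aestronglyMeasurable measurableSet_Ioi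

lemma integrable_upper {x : ℝ} (hx : 0 < x) :
    IntegrableOn (fun t => phi t * (1 + 1 / t ^ 2)) (Set.Ioi x) := by
  refine Integrable.mono' ((integrable_phi.const_mul (1 + 1 / x ^ 2)).integrableOn)
    (aesm_aux _ (phi_cont.continuousOn.mul (continuousOn_const.add
      (continuousOn_const.div (continuous_pow 2).continuousOn
        (fun t ht => by have h1 : 0 < t := lt_trans hx ht; positivity))))) ?_
  · filter_upwards [ae_restrict_mem measurableSet_Ioi] with t ht
    have htx : x < t := ht
    have h1 : 0 < t := lt_trans hx htx
    rw [Real.norm_eq_abs, abs_of_pos (mul_pos (phi_pos t) (by positivity))]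
    have : 1 / t ^ 2 ≤ 1 / x ^ 2 := by
      apply one_div_le_one_div_of_le (by positivity)
      exact pow_le_pow_left₀ hx.le htx.le 2
    nlinarith [phi_pos t]

lemma integrable_lower {x : ℝ} (hx : 0 < x) :
    IntegrableOn (fun t => phi t * (1 - 3 / t ^ 4)) (Set.Ioi x) := by
  refine Integrable.mono' ((integrable_phi.const_mul (1 + 3 / x ^ 4)).integrableOn)
    (aesm_aux _ (phi_cont.continuousOn.mul (continuousOn_const.sub
      (continuousOn_const.div (continuous_pow 4).continuousOn
        (fun t ht => by have h1 : 0 < t := lt_trans hx ht; positivity))))) ?_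
  · filter_upwards [ae_restrict_mem measurableSet_Ioi] with t ht
    have htx : x < t := ht
    have h1 : 0 < t := lt_trans hx htx
    have h3 : 3 / t ^ 4 ≤ 3 / x ^ 4 := by
      apply div_le_div_of_nonneg_left (by norm_num) (by positivity)
      exact pow_le_pow_left₀ hx.le htx.le 4
    have h4 : (0:ℝ) < 3 / t ^ 4 := by positivity
    rw [Real.norm_eq_abs, abs_mul, abs_of_pos (phi_pos t)]
    have : |1 - 3 / t ^ 4| ≤ 1 + 3 / x ^ 4 := by
      rw [abs_le]; constructor <;> nlinarith
    nlinarith [phi_pos t]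

lemma integral_upper {x : ℝ} (hx : 0 < x) :
    ∫ t in Set.Ioi x, phi t * (1 + 1 / t ^ 2) = phi x / x := by
  have hderiv : ∀ t ∈ Set.Ici x, HasDerivAt (fun t => -phi t / t) (phi t * (1 + 1 / t ^ 2)) t := by
    intro t ht
    have htpos : 0 < t := lt_of_lt_of_le hx ht
    have h := ((hasDerivAt_phi t).neg).div (hasDerivAt_id t) htpos.ne'
    refine h.congr_deriv ?_
    simp only [id, Pi.neg_apply]
    field_simp
    ring
  have hlim : Tendsto (fun t => -phi t / t) atTop (nhds 0) := by
    have := (tendsto_phi_atTop.neg).mul tendsto_inv_atTop_zero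
    simpa [div_eq_mul_inv] using this
  have := integral_Ioi_of_hasDerivAt_of_tendsto' hderiv (integrable_upper hx) hlim
  rw [this]; ring

lemma integral_lower {x : ℝ} (hx : 0 < x) :
    ∫ t in Set.Ioi x, phi t * (1 - 3 / t ^ 4) = phi x / x - phi x / x ^ 3 := by
  have hderiv : ∀ t ∈ Set.Ici x,
      HasDerivAt (fun t => -phi t / t + phi t / t ^ 3) (phi t * (1 - 3 / t ^ 4)) t := by
    intro t ht
    have htpos : 0 < t := lt_of_lt_of_le hx ht
    have h1 := ((hasDerivAt_phi t).neg).div (hasDerivAt_id t) htpos.ne'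
    have h2 := (hasDerivAt_phi t).div (hasDerivAt_pow 3 t) (by positivity)
    have h := h1.add h2
    refine h.congr_deriv ?_
    simp only [id, Pi.neg_apply]
    field_simp
    ring
  have hlim : Tendsto (fun t => -phi t / t + phi t / t ^ 3) atTop (nhds 0) := by
    have h1 : Tendsto (fun t : ℝ => -phi t / t) atTop (nhds 0) := by
      have := (tendsto_phi_atTop.neg).mul tendsto_inv_atTop_zero
      simpa [div_eq_mul_inv] using this
    have h2 : Tendsto (fun t : ℝ => phi t / t ^ 3) atTop (nhds 0) := by
      have := tendsto_phi_atTop.mul ((tendsto_pow_atTop (n := 3) (by norm_num)).inv_tendsto_atTop)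
      simpa [div_eq_mul_inv] using this
    simpa using h1.add h2
  have := integral_Ioi_of_hasDerivAt_of_tendsto' hderiv (integrable_lower hx) hlim
  rw [this]; ring

lemma T_le {x : ℝ} (hx : 0 < x) : T x ≤ phi x / x := by
  rw [← integral_upper hx, T]
  refine setIntegral_mono_on integrable_phi.integrableOn (integrable_upper hx)
    measurableSet_Ioi fun t ht => ?_
  have h1 : 0 < t := lt_trans hx ht
  nlinarith [phi_pos t, sq_nonneg t, div_pos (one_pos) (pow_pos h1 2)]

lemma le_T {x : ℝ} (hx : 0 < x) : phi x / x - phi x / x ^ 3 ≤ T x := by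
  rw [← integral_lower hx, T]
  refine setIntegral_mono_on (integrable_lower hx) integrable_phi.integrableOn
    measurableSet_Ioi fun t ht => ?_
  have h1 : 0 < t := lt_trans hx ht
  nlinarith [phi_pos t, div_pos (by norm_num : (0:ℝ) < 3) (pow_pos h1 4)]

lemma R_le_one {x : ℝ} (hx : 0 < x) : T x * x / phi x ≤ 1 := by
  rw [div_le_one (phi_pos x)]
  have := T_le hx
  calc T x * x ≤ phi x / x * x := by nlinarith [T_pos x]
  _ = phi x := by field_simp

lemma one_sub_le_R {x : ℝ} (hx : 0 < x) : 1 - 1 / x ^ 2 ≤ T x * x / phi x := by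
  rw [le_div_iff₀ (phi_pos x)]
  have h := le_T hx
  have he : phi x / x * x = phi x := by field_simp
  have he2 : phi x / x ^ 3 * x = phi x / x ^ 2 := by field_simp
  calc (1 - 1 / x ^ 2) * phi x = phi x / x * x - phi x / x ^ 3 * x := by
        rw [he, he2]; field_simp
  _ = (phi x / x - phi x / x ^ 3) * x := by ring
  _ ≤ T x * x := by nlinarith

lemma tendsto_R : Tendsto (fun x => T x * x / phi x) atTop (nhds 1) := by
  have hg : Tendsto (fun x : ℝ => 1 - 1 / x ^ 2) atTop (nhds 1) := by
    have hp : Tendsto (fun x : ℝ => x ^ 2) atTop atTop := tendsto_pow_atTop (by norm_num)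
    have h0 : Tendsto (fun x : ℝ => 1 / x ^ 2) atTop (nhds 0) := by
      simpa [one_div, Pi.inv_def] using hp.inv_tendsto_atTop
    simpa using tendsto_const_nhds.sub h0
  have hh : Tendsto (fun _ : ℝ => (1:ℝ)) atTop (nhds 1) := tendsto_const_nhds
  exact tendsto_of_tendsto_of_tendsto_of_le_of_le' hg hh
    (by filter_upwards [eventually_gt_atTop (0:ℝ)] with x hx using one_sub_le_R hx)
    (by filter_upwards [eventually_gt_atTop (0:ℝ)] with x hx using R_le_one hx)

noncomputable def E (x : ℝ) : ℝ := Real.log (T x * x / phi x)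

lemma tendsto_E : Tendsto E atTop (nhds 0) := by
  have h := (Real.continuousAt_log one_ne_zero).tendsto.comp tendsto_R
  rw [Real.log_one] at h
  exact h

lemma log_T {x : ℝ} (hx : 0 < x) :
    Real.log (T x) = -x ^ 2 / 2 - Real.log (2 * Real.pi) / 2 - Real.log x + E x := by
  have hT := T_pos x
  have hphi := phi_pos x
  have hd : T x = phi x / x * (T x * x / phi x) := by field_simp
  rw [hd, Real.log_mul (by positivity) (by positivity), Real.log_div hphi.ne' hx.ne', E]
  have hlogphi : Real.log (phi x) = -x ^ 2 / 2 - Real.log (2 * Real.pi) / 2 := by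
    rw [phi, Real.log_div (Real.exp_pos _).ne' (by positivity), Real.log_exp,
      Real.log_sqrt (by positivity)]
  rw [hlogphi]

lemma tendsto_T_zero : Tendsto T atTop (nhds 0) := by
  have hh : Tendsto (fun x : ℝ => phi x / x) atTop (nhds 0) := by
    have := tendsto_phi_atTop.mul tendsto_inv_atTop_zero
    simpa [div_eq_mul_inv] using this
  have hg : Tendsto (fun _ : ℝ => (0:ℝ)) atTop (nhds 0) := tendsto_const_nhds
  exact tendsto_of_tendsto_of_tendsto_of_le_of_le' hg hh
    (by filter_upwards with x using (T_pos x).le)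
    (by filter_upwards [eventually_gt_atTop (0:ℝ)] with x hx using T_le hx)

lemma Phi_tendsto_one : Tendsto Phi atTop (nhds 1) := by
  have h : Phi = fun x => 1 - T x := funext fun x => by have := Phi_add_T x; linarith
  rw [h]
  simpa using tendsto_const_nhds.sub tendsto_T_zero

lemma Phi_eq_T_neg (x : ℝ) : Phi x = T (-x) := by
  rw [Phi_eq, T]
  have h : ∀ t : ℝ, phi t = phi (-t) := fun t => by simp [phi]
  calc ∫ t in Set.Iic x, phi t = ∫ t in Set.Iic x, phi (-t) := by
        exact setIntegral_congr_fun measurableSet_Iic fun t _ => h t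
  _ = ∫ t in Set.Ioi (-x), phi t := integral_comp_neg_Iic x phi

lemma Phi_tendsto_zero : Tendsto Phi atBot (nhds 0) := by
  have h : Tendsto (fun x : ℝ => -x) atBot atTop := tendsto_neg_atBot_atTop
  have := tendsto_T_zero.comp h
  exact this.congr fun x => (Phi_eq_T_neg x).symm

lemma exists_Phi_eq {p : ℝ} (h0 : 0 < p) (h1 : p < 1) : ∃ x, Phi x = p := by
  obtain ⟨b, hb⟩ := (Phi_tendsto_one.eventually (eventually_gt_nhds h1)).exists
  obtain ⟨a, ha⟩ := (Phi_tendsto_zero.eventually (eventually_lt_nhds h0)).exists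
  have hab : a ≤ b := le_of_lt (Phi_strictMono.lt_iff_lt.1 (lt_trans ha hb))
  obtain ⟨x, _, hx⟩ := intermediate_value_Icc hab Phi_continuous.continuousOn
    (Set.mem_Icc.2 ⟨ha.le, hb.le⟩)
  exact ⟨x, hx⟩

lemma Phi_PhiInv {p : ℝ} (h0 : 0 < p) (h1 : p < 1) : Phi (PhiInv p) = p :=
  Function.invFun_eq (exists_Phi_eq h0 h1)

lemma Phi_aSeq {n : ℕ} (hn : 2 ≤ n) : Phi (aSeq n) = 1 - 1 / n := by
  have hn' : (2:ℝ) ≤ n := by exact_mod_cast hn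
  have h1 : (0:ℝ) < 1 / n := by positivity
  have h2 : (1:ℝ) / n ≤ 1 / 2 := by
    apply one_div_le_one_div_of_le <;> linarith
  exact Phi_PhiInv (by linarith) (by linarith)

lemma T_aSeq {n : ℕ} (hn : 2 ≤ n) : T (aSeq n) = 1 / n := by
  have := Phi_add_T (aSeq n)
  rw [Phi_aSeq hn] at this
  linarith

lemma aSeq_tendsto : Tendsto aSeq atTop atTop := by
  rw [tendsto_atTop]
  intro M
  have hlt : Phi M < 1 := Phi_lt_one M
  have h1 : Tendsto (fun n : ℕ => 1 - 1 / (n:ℝ)) atTop (nhds 1) := by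
    simpa using (tendsto_const_nhds (x := (1:ℝ))).sub tendsto_one_div_atTop_nhds_zero_nat
  filter_upwards [h1.eventually (eventually_gt_nhds hlt), eventually_ge_atTop 2] with n hn h2
  rw [← Phi_aSeq h2] at hn
  exact (Phi_strictMono.lt_iff_lt.1 hn).le

lemma tendsto_log_lin (c : ℝ) :
    Tendsto (fun y : ℝ => Real.log (2 * y + c) / y) atTop (nhds 0) := by
  have hlin : Tendsto (fun y : ℝ => 2 * y + c) atTop atTop :=
    tendsto_atTop_add_const_right _ c (tendsto_id.const_mul_atTop two_pos)
  have h1 : (fun y : ℝ => Real.log (2 * y + c)) =o[atTop] (fun y : ℝ => 2 * y + c) :=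
    Real.isLittleO_log_id_atTop.comp_tendsto hlin
  have h2 : (fun y : ℝ => 2 * y + c) =O[atTop] (fun y : ℝ => y) := by
    rw [Asymptotics.isBigO_iff]
    refine ⟨2 + |c|, ?_⟩
    filter_upwards [eventually_ge_atTop (1:ℝ)] with y hy
    have h3 : |2 * y + c| ≤ 2 * y + |c| := by
      calc |2 * y + c| ≤ |2 * y| + |c| := abs_add_le _ _
      _ = 2 * y + |c| := by rw [abs_of_pos (by linarith)]
    rw [Real.norm_eq_abs, Real.norm_eq_abs, abs_of_pos (by linarith : (0:ℝ) < y)]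
    nlinarith [abs_nonneg c]
  exact (h1.trans_isBigO h2).tendsto_div_nhds_zero

lemma ev_key : ∀ᶠ n : ℕ in atTop, aSeq n ^ 2 =
    2 * Real.log n - 2 * Real.log (aSeq n) - Real.log (2 * Real.pi) + 2 * E (aSeq n) := by
  filter_upwards [eventually_ge_atTop 2, aSeq_tendsto.eventually_gt_atTop 0] with n hn ha
  have h := log_T ha
  rw [T_aSeq hn] at h
  have hn0 : (0:ℝ) < n := by
    have : (2:ℝ) ≤ n := by exact_mod_cast hn
    linarith
  rw [one_div, Real.log_inv] at h
  linarith

lemma hEn : Tendsto (fun n : ℕ => E (aSeq n)) atTop (nhds 0) := tendsto_E.comp aSeq_tendsto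

lemma hL : Tendsto (fun n : ℕ => Real.log n) atTop atTop :=
  Real.tendsto_log_atTop.comp tendsto_natCast_atTop_atTop

lemma ev_logA_bound : ∀ᶠ n : ℕ in atTop,
    0 ≤ Real.log (aSeq n) ∧
    Real.log (aSeq n) ≤ Real.log (2 * Real.log n + (|Real.log (2 * Real.pi)| + 2)) / 2 := by
  set c := |Real.log (2 * Real.pi)| + 2 with hc
  filter_upwards [ev_key, aSeq_tendsto.eventually_ge_atTop 1,
    hEn.eventually (eventually_le_nhds (by norm_num : (0:ℝ) < 1)),
    hL.eventually_ge_atTop 1] with n hkey hA hE hLn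
  have hlogA : 0 ≤ Real.log (aSeq n) := Real.log_nonneg hA
  refine ⟨hlogA, ?_⟩
  have habs : -|Real.log (2 * Real.pi)| ≤ Real.log (2 * Real.pi) := neg_abs_le _
  have hsq : aSeq n ^ 2 ≤ 2 * Real.log n + c := by rw [hc]; linarith
  have hpos : (0:ℝ) ≤ 2 * Real.log n + c := by
    rw [hc]; positivity
  have hA' : aSeq n ≤ Real.sqrt (2 * Real.log n + c) :=
    (Real.le_sqrt (by linarith) hpos).2 hsq
  calc Real.log (aSeq n) ≤ Real.log (Real.sqrt (2 * Real.log n + c)) :=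
        Real.log_le_log (by linarith) hA'
  _ = Real.log (2 * Real.log n + c) / 2 := Real.log_sqrt hpos

lemma hlogA_div : Tendsto (fun n : ℕ => Real.log (aSeq n) / Real.log n) atTop (nhds 0) := by
  set c := |Real.log (2 * Real.pi)| + 2 with hc
  have hupper : Tendsto (fun n : ℕ => Real.log (2 * Real.log n + c) / Real.log n / 2)
      atTop (nhds 0) := by
    have := ((tendsto_log_lin c).comp hL).div_const 2
    simpa using this
  have hlower : Tendsto (fun _ : ℕ => (0:ℝ)) atTop (nhds 0) := tendsto_const_nhds
  refine tendsto_of_tendsto_of_tendsto_of_le_of_le' hlower hupper ?_ ?_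
  · filter_upwards [ev_logA_bound, hL.eventually_gt_atTop 0] with n hb hLn
    exact div_nonneg hb.1 hLn.le
  · filter_upwards [ev_logA_bound, hL.eventually_gt_atTop 0] with n hb hLn
    have h1 : Real.log (aSeq n) / Real.log n
        ≤ Real.log (2 * Real.log n + c) / 2 / Real.log n := by
      gcongr
      exact hb.2
    calc Real.log (aSeq n) / Real.log n
        ≤ Real.log (2 * Real.log n + c) / 2 / Real.log n := h1
    _ = Real.log (2 * Real.log n + c) / Real.log n / 2 := by ring

lemma hq : Tendsto (fun n : ℕ => aSeq n ^ 2 / (2 * Real.log n)) atTop (nhds 1) := by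
  have hinvL : Tendsto (fun n : ℕ => (Real.log n)⁻¹) atTop (nhds 0) := hL.inv_tendsto_atTop
  have hmain : Tendsto (fun n : ℕ => 1 - Real.log (aSeq n) / Real.log n
      - Real.log (2 * Real.pi) / 2 * (Real.log n)⁻¹ + E (aSeq n) * (Real.log n)⁻¹)
      atTop (nhds 1) := by
    have h1 := (tendsto_const_nhds (x := (1:ℝ)) (f := atTop (α := ℕ))).sub hlogA_div
    have h2 := h1.sub ((tendsto_const_nhds (x := Real.log (2 * Real.pi) / 2)
      (f := atTop (α := ℕ))).mul hinvL)
    have h3 := h2.add (hEn.mul hinvL)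
    simpa using h3
  refine hmain.congr' ?_
  filter_upwards [ev_key, hL.eventually_gt_atTop 0] with n hkey hLn
  rw [hkey]
  field_simp

lemma hu : Tendsto (fun n : ℕ => 2 * Real.log (aSeq n) - Real.log (2 * Real.log n))
    atTop (nhds 0) := by
  have hcomp := (Real.continuousAt_log one_ne_zero).tendsto.comp hq
  rw [Real.log_one] at hcomp
  refine hcomp.congr' ?_
  filter_upwards [aSeq_tendsto.eventually_ge_atTop 1, hL.eventually_gt_atTop 0] with n hA hLn
  have hA0 : (0:ℝ) < aSeq n := by linarith
  show Real.log (aSeq n ^ 2 / (2 * Real.log n)) = _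
  rw [Real.log_div (by positivity) (by positivity), Real.log_pow]
  push_cast
  ring

end Stmt9

theorem stmt9 :
    Tendsto (fun n : ℕ =>
        (aSeq n) ^ 2 - (2 * Real.log n - Real.log (Real.log n) - Real.log (4 * Real.pi)))
      atTop (nhds 0) := by
  have h : Tendsto (fun n : ℕ => -(2 * Real.log (aSeq n) - Real.log (2 * Real.log n))
      + 2 * Stmt9.E (aSeq n)) atTop (nhds 0) := by
    simpa using (Stmt9.hu.neg).add (Stmt9.hEn.const_mul 2)
  refine h.congr' ?_
  filter_upwards [Stmt9.ev_key, Stmt9.hL.eventually_gt_atTop 0] with n hkey hLn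
  have hlog2L : Real.log (2 * Real.log n) = Real.log 2 + Real.log (Real.log n) :=
    Real.log_mul two_ne_zero hLn.ne'
  have hlog4pi : Real.log (4 * Real.pi) = Real.log 2 + Real.log (2 * Real.pi) := by
    rw [show (4:ℝ) * Real.pi = 2 * (2 * Real.pi) by ring,
      Real.log_mul two_ne_zero (by positivity)]
  show -(2 * Real.log (aSeq n) - Real.log (2 * Real.log n)) + 2 * Stmt9.E (aSeq n) = _
  rw [hkey, hlog2L, hlog4pi]
  ring
end

section
/- With a_n = Φ⁻¹(1-1/n), for any t ≠ 0, the ratio of (1/√(2π))·e^{-a_n²/2}·e^{-a_n t}/√(2 log n) to e^{-t√(2 log n)}/n tends to 1 as n → ∞. -/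
open Filter MeasureTheory

namespace Stmt11Aux

open Real Set ProbabilityTheory

noncomputable def g (x : ℝ) : ℝ := Real.exp (-x ^ 2 / 2) / Real.sqrt (2 * Real.pi)

lemma sqrt2pi_pos : 0 < Real.sqrt (2 * Real.pi) := Real.sqrt_pos.mpr (by positivity)

lemma g_pos (x : ℝ) : 0 < g x := div_pos (Real.exp_pos _) sqrt2pi_pos

lemma g_cont : Continuous g := by unfold g; fun_prop

lemma g_eq : gaussianPDFReal 0 1 = g := by
  funext x
  simp only [gaussianPDFReal, g, NNReal.coe_one, mul_one, sub_zero]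
  rw [inv_mul_eq_div]

lemma integrable_g : Integrable g := by rw [← g_eq]; exact integrable_gaussianPDFReal 0 1

lemma integral_g : ∫ x, g x = 1 := by
  rw [← g_eq]; exact integral_gaussianPDFReal_eq_one 0 one_ne_zero

lemma Phi_eq_cdf (x : ℝ) : Phi x = cdf (gaussianReal 0 1) x := by
  rw [cdf_eq_real, measureReal_def, gaussianReal_apply_eq_integral 0 one_ne_zero,
    ENNReal.toReal_ofReal (integral_nonneg fun y => gaussianPDFReal_nonneg 0 1 y), g_eq]
  rfl

lemma Phi_tendsto_atTop : Tendsto Phi atTop (nhds 1) := by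
  have := tendsto_cdf_atTop (gaussianReal 0 1)
  exact this.congr fun x => (Phi_eq_cdf x).symm

lemma Phi_tendsto_atBot : Tendsto Phi atBot (nhds 0) := by
  have := tendsto_cdf_atBot (gaussianReal 0 1)
  exact this.congr fun x => (Phi_eq_cdf x).symm

lemma Phi_eq_interval (y : ℝ) : Phi y = Phi 0 + ∫ u in (0:ℝ)..y, g u := by
  have hint : ∀ s : Set ℝ, IntegrableOn g s := fun s => integrable_g.integrableOn
  rcases le_total 0 y with h | h
  · rw [intervalIntegral.integral_of_le h]
    have := setIntegral_union (f := g) (μ := volume) (s := Iic (0:ℝ)) (t := Ioc (0:ℝ) y)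
      (Set.Iic_disjoint_Ioc (le_refl (0:ℝ))) measurableSet_Ioc (hint _) (hint _)
    rw [Set.Iic_union_Ioc_eq_Iic h] at this
    show (∫ t in Iic y, g t) = (∫ t in Iic 0, g t) + _
    rw [this]
  · rw [intervalIntegral.integral_of_ge h]
    have := setIntegral_union (f := g) (μ := volume) (s := Iic y) (t := Ioc y (0:ℝ))
      (Set.Iic_disjoint_Ioc (le_refl y)) measurableSet_Ioc (hint _) (hint _)
    rw [Set.Iic_union_Ioc_eq_Iic h] at this
    show (∫ t in Iic y, g t) = (∫ t in Iic 0, g t) + _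
    rw [this]; ring

lemma hasDerivAt_Phi (x : ℝ) : HasDerivAt Phi (g x) x := by
  have h : HasDerivAt (fun u => ∫ s in (0:ℝ)..u, g s) (g x) x :=
    (intervalIntegral.integral_hasStrictDerivAt_right
      (integrable_g.intervalIntegrable) (g_cont.stronglyMeasurableAtFilter _ _)
      g_cont.continuousAt).hasDerivAt
  have := (h.const_add (Phi 0))
  exact this.congr_of_eventuallyEq (Filter.Eventually.of_forall fun y => Phi_eq_interval y)

lemma Phi_continuous : Continuous Phi :=
  continuous_iff_continuousAt.mpr fun x => (hasDerivAt_Phi x).continuousAt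

lemma Phi_strictMono : StrictMono Phi :=
  strictMono_of_hasDerivAt_pos hasDerivAt_Phi g_pos

noncomputable def G (x : ℝ) : ℝ := ∫ y in Ioi x, g y

lemma G_eq (x : ℝ) : G x = 1 - Phi x := by
  have := intervalIntegral.integral_Iic_add_Ioi (f := g) (b := x) (μ := volume)
    integrable_g.integrableOn integrable_g.integrableOn
  rw [integral_g] at this
  show (∫ y in Ioi x, g y) = 1 - Phi x
  show (∫ y in Ioi x, g y) = 1 - ∫ t in Iic x, g t
  linarith

lemma G_pos (x : ℝ) : 0 < G x := by
  rw [G]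
  rw [setIntegral_pos_iff_support_of_nonneg_ae
    (Filter.Eventually.of_forall fun y => (g_pos y).le) integrable_g.integrableOn]
  have : Function.support g = univ := by
    ext y; simp [Function.mem_support, (g_pos y).ne']
  rw [this, Set.univ_inter]
  simp [Real.volume_Ioi]

lemma Phi_lt_one (x : ℝ) : Phi x < 1 := by have := G_pos x; rw [G_eq] at this; linarith

lemma exists_Phi_eq {p : ℝ} (hp0 : 0 < p) (hp1 : p < 1) : ∃ a, Phi a = p := by
  obtain ⟨x₁, hx₁⟩ := (Phi_tendsto_atBot.eventually_lt_const hp0).exists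
  obtain ⟨x₂, hx₂⟩ := (Phi_tendsto_atTop.eventually_const_lt hp1).exists
  have hle : x₁ ≤ x₂ := by
    by_contra h
    exact absurd (Phi_strictMono.monotone (le_of_not_ge h)) (by linarith)
  have := intermediate_value_Icc hle Phi_continuous.continuousOn
  obtain ⟨a, _, ha⟩ := this ⟨hx₁.le, hx₂.le⟩
  exact ⟨a, ha⟩

lemma Phi_aSeq {n : ℕ} (hn : 2 ≤ n) : Phi (aSeq n) = 1 - 1 / n := by
  have hn' : (2:ℝ) ≤ n := by exact_mod_cast hn
  refine Function.invFun_eq (exists_Phi_eq ?_ ?_)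
  · have : 1 / (n:ℝ) ≤ 1/2 := by
      apply div_le_div_of_nonneg_left <;> linarith
    linarith
  · have : 0 < 1 / (n:ℝ) := by positivity
    linarith

lemma aSeq_tendsto : Tendsto aSeq atTop atTop := by
  rw [tendsto_atTop]
  intro b
  have h1 : Tendsto (fun n : ℕ => 1 - 1/(n:ℝ)) atTop (nhds 1) := by
    simpa using (tendsto_one_div_atTop_nhds_zero_nat (𝕜 := ℝ)).const_sub 1
  filter_upwards [h1.eventually_const_lt (Phi_lt_one b), eventually_ge_atTop 2] with n hn h2
  rw [← Phi_aSeq h2] at hn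
  exact (Phi_strictMono.lt_iff_lt.mp hn).le

lemma hasDerivAt_g (y : ℝ) : HasDerivAt g (-y * g y) y := by
  have h0 : HasDerivAt (fun u : ℝ => u ^ 2) (2 * y) y := by
    simpa using hasDerivAt_pow 2 y
  have h1 : HasDerivAt (fun u : ℝ => -u ^ 2 / 2) (-y) y := by
    have := h0.neg.div_const 2
    refine this.congr_deriv ?_
    ring
  have h2 := (h1.exp).div_const (Real.sqrt (2 * Real.pi))
  have h3 : HasDerivAt g (Real.exp (-y ^ 2 / 2) * -y / Real.sqrt (2 * Real.pi)) y := h2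
  convert h3 using 1
  unfold g; ring

lemma tendsto_g_atTop : Tendsto g atTop (nhds 0) := by
  have hsq : Tendsto (fun x : ℝ => x ^ 2) atTop atTop := tendsto_pow_atTop (by norm_num)
  have h1 : Tendsto (fun x : ℝ => -x ^ 2 / 2) atTop atBot :=
    (tendsto_neg_atTop_atBot.comp hsq).atBot_div_const (by norm_num)
  have := (Real.tendsto_exp_atBot.comp h1).div_const (Real.sqrt (2 * Real.pi))
  rw [zero_div] at this; exact this

lemma integrableOn_mul_g (x : ℝ) : IntegrableOn (fun y => y * g y) (Ioi x) := by
  have h := integrable_mul_exp_neg_mul_sq (b := (1/2 : ℝ)) (by norm_num)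
  have h2 : (fun y : ℝ => y * g y) = fun y => (y * Real.exp (-(1/2) * y ^ 2)) / Real.sqrt (2 * Real.pi) := by
    funext y
    rw [g, show -(1/2 : ℝ) * y ^ 2 = -y ^ 2 / 2 by ring]
    ring
  rw [h2]
  exact (h.div_const _).integrableOn

lemma integral_mul_g (x : ℝ) : ∫ y in Ioi x, y * g y = g x := by
  have h := integral_Ioi_of_hasDerivAt_of_tendsto (f := fun u => -g u)
    (f' := fun y => y * g y) (a := x) (m := 0)
    ((g_cont.neg).continuousWithinAt)
    (fun y _ => by simpa [Pi.neg_def] using (hasDerivAt_g y).neg)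
    (integrableOn_mul_g x)
    (by simpa using tendsto_g_atTop.neg)
  simpa using h

lemma G_le (x : ℝ) (hx : 0 < x) : G x ≤ g x / x := by
  have hmono : G x ≤ ∫ y in Ioi x, y * g y / x := by
    apply setIntegral_mono_on integrable_g.integrableOn
      ((integrableOn_mul_g x).div_const x) measurableSet_Ioi
    intro y hy
    have hy' : x ≤ y := (mem_Ioi.mp hy).le
    have := g_pos y
    rw [le_div_iff₀ hx]
    nlinarith
  calc G x ≤ ∫ y in Ioi x, y * g y / x := hmono
    _ = (∫ y in Ioi x, y * g y) / x := integral_div _ _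
    _ = g x / x := by rw [integral_mul_g]

lemma hasDerivAt_F {y : ℝ} (hy : 0 < y) :
    HasDerivAt (fun u => g u * ((u ^ 3)⁻¹ - u⁻¹)) (g y * (1 - 3 * (y ^ 4)⁻¹)) y := by
  have h3 : HasDerivAt (fun u : ℝ => (u ^ 3)⁻¹)
      (-(↑3 * y ^ 2) / (y ^ 3) ^ 2) y := by
    simpa [Pi.inv_def] using (hasDerivAt_pow 3 y).inv (pow_ne_zero 3 hy.ne')
  have h1 : HasDerivAt (fun u : ℝ => u⁻¹) (-(y ^ 2)⁻¹) y := hasDerivAt_inv hy.ne'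
  have := (hasDerivAt_g y).mul (h3.sub h1)
  refine this.congr_deriv ?_
  have hg := g_pos y
  simp only [Pi.sub_apply]
  field_simp
  ring

lemma tendsto_F_atTop :
    Tendsto (fun u : ℝ => g u * ((u ^ 3)⁻¹ - u⁻¹)) atTop (nhds 0) := by
  have hcube : Tendsto (fun u : ℝ => u ^ 3) atTop atTop := tendsto_pow_atTop (by norm_num)
  have h3 : Tendsto (fun u : ℝ => (u ^ 3)⁻¹) atTop (nhds 0) := hcube.inv_tendsto_atTop
  have h1 : Tendsto (fun u : ℝ => u⁻¹) atTop (nhds 0) := tendsto_inv_atTop_zero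
  simpa using tendsto_g_atTop.mul (h3.sub h1)

lemma integrableOn_lower (x : ℝ) (hx : 1 ≤ x) :
    IntegrableOn (fun y => g y * (1 - 3 * (y ^ 4)⁻¹)) (Ioi x) := by
  apply Integrable.mono ((integrable_g.const_mul 4).integrableOn (s := Ioi x))
  · apply AEStronglyMeasurable.mul (g_cont.aestronglyMeasurable.restrict)
    exact ((measurable_const.sub ((measurable_id.pow_const 4).inv.const_mul 3))).aestronglyMeasurable.restrict
  · rw [ae_restrict_iff' measurableSet_Ioi]
    apply Filter.Eventually.of_forall
    intro y hy
    have hy1 : 1 ≤ y := hx.trans (mem_Ioi.mp hy).le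
    have h4 : (0:ℝ) < y ^ 4 := by positivity
    have h14 : (1:ℝ) ≤ y ^ 4 := by
      have := pow_le_pow_left₀ (by norm_num : (0:ℝ) ≤ 1) hy1 4
      simpa using this
    have h4' : (y ^ 4)⁻¹ ≤ 1 := by
      rw [← one_div, div_le_one h4]; exact h14
    have hgy := g_pos y
    rw [Real.norm_eq_abs, Real.norm_eq_abs, abs_mul, abs_of_pos hgy, abs_of_pos (by linarith : (0:ℝ) < 4 * g y)]
    have : |1 - 3 * (y ^ 4)⁻¹| ≤ 4 := by
      rw [abs_le]
      constructor <;> nlinarith [inv_nonneg.mpr h4.le]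
    nlinarith [abs_nonneg (1 - 3 * (y ^ 4)⁻¹)]

lemma integral_lower (x : ℝ) (hx : 1 ≤ x) :
    ∫ y in Ioi x, g y * (1 - 3 * (y ^ 4)⁻¹) = g x * (x⁻¹ - (x ^ 3)⁻¹) := by
  have hx0 : 0 < x := lt_of_lt_of_le one_pos hx
  have h := integral_Ioi_of_hasDerivAt_of_tendsto
    (f := fun u => g u * ((u ^ 3)⁻¹ - u⁻¹))
    (f' := fun y => g y * (1 - 3 * (y ^ 4)⁻¹)) (a := x) (m := 0)
    (hasDerivAt_F hx0).continuousAt.continuousWithinAt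
    (fun y hy => hasDerivAt_F (hx0.trans (mem_Ioi.mp hy)))
    (integrableOn_lower x hx)
    tendsto_F_atTop
  rw [h]; ring

lemma le_G (x : ℝ) (hx : 1 ≤ x) : g x * (x⁻¹ - (x ^ 3)⁻¹) ≤ G x := by
  rw [← integral_lower x hx]
  apply setIntegral_mono_on (integrableOn_lower x hx) integrable_g.integrableOn measurableSet_Ioi
  intro y hy
  have hy1 : 1 ≤ y := hx.trans (mem_Ioi.mp hy).le
  have h4 : (0:ℝ) < (y ^ 4)⁻¹ := by positivity
  have := g_pos y
  nlinarith

noncomputable def M (x : ℝ) : ℝ := x * G x / g x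

lemma M_def (x : ℝ) : M x = x * G x / g x := rfl

lemma M_le_one (x : ℝ) (hx : 1 ≤ x) : M x ≤ 1 := by
  have hx0 : 0 < x := lt_of_lt_of_le one_pos hx
  have hg := g_pos x
  have hGle := G_le x hx0
  unfold M
  rw [div_le_one hg]
  calc x * G x ≤ x * (g x / x) := mul_le_mul_of_nonneg_left hGle hx0.le
    _ = g x := by field_simp

lemma le_M (x : ℝ) (hx : 1 ≤ x) : 1 - (x ^ 2)⁻¹ ≤ M x := by
  have hx0 : 0 < x := lt_of_lt_of_le one_pos hx
  have hg := g_pos x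
  have h := le_G x hx
  unfold M
  rw [le_div_iff₀ hg]
  have key : (1 - (x ^ 2)⁻¹) * g x = x * (g x * (x⁻¹ - (x ^ 3)⁻¹)) := by
    field_simp
  rw [key]
  exact mul_le_mul_of_nonneg_left h hx0.le

lemma tendsto_M : Tendsto M atTop (nhds 1) := by
  have hsq : Tendsto (fun x : ℝ => x ^ 2) atTop atTop := tendsto_pow_atTop (by norm_num)
  have hlow : Tendsto (fun x : ℝ => 1 - (x ^ 2)⁻¹) atTop (nhds 1) := by
    have h2 : Tendsto (fun x : ℝ => (x ^ 2)⁻¹) atTop (nhds 0) := hsq.inv_tendsto_atTop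
    simpa using h2.const_sub 1
  apply tendsto_of_tendsto_of_tendsto_of_le_of_le' hlow tendsto_const_nhds
  · filter_upwards [eventually_ge_atTop (1:ℝ)] with x hx using le_M x hx
  · filter_upwards [eventually_ge_atTop (1:ℝ)] with x hx using M_le_one x hx

end Stmt11Aux

open Stmt11Aux

theorem stmt11 (t : ℝ) (ht : t ≠ 0) :
    Tendsto (fun n : ℕ =>
        ((1 / Real.sqrt (2 * Real.pi)) * Real.exp (-(aSeq n) ^ 2 / 2) * Real.exp (-(aSeq n) * t)
            / Real.sqrt (2 * Real.log n))
          / (Real.exp (-t * Real.sqrt (2 * Real.log n)) / n))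
      atTop (nhds 1) := by
  have ha : Tendsto aSeq atTop atTop := aSeq_tendsto
  have hM : Tendsto (fun n => M (aSeq n)) atTop (nhds 1) := tendsto_M.comp ha
  have hL : Tendsto (fun n : ℕ => Real.sqrt (2 * Real.log n)) atTop atTop := by
    rw [tendsto_atTop]
    intro b
    have hlog : Tendsto (fun n : ℕ => Real.log n) atTop atTop :=
      Real.tendsto_log_atTop.comp tendsto_natCast_atTop_atTop
    filter_upwards [hlog.eventually_ge_atTop (b ^ 2 / 2)] with n hn
    calc b ≤ |b| := le_abs_self b
      _ = Real.sqrt (b ^ 2) := (Real.sqrt_sq_eq_abs b).symm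
      _ ≤ Real.sqrt (2 * Real.log n) := Real.sqrt_le_sqrt (by linarith)
  have ha1 : ∀ᶠ n in atTop, 1 ≤ aSeq n := ha.eventually_ge_atTop 1
  have hGEq : ∀ᶠ n : ℕ in atTop, G (aSeq n) = 1 / n := by
    filter_upwards [eventually_ge_atTop 2] with n hn
    rw [G_eq, Phi_aSeq hn]; ring
  have hkey : ∀ᶠ n : ℕ in atTop, aSeq n ^ 2 - 2 * Real.log n =
      2 * Real.log (M (aSeq n)) - 2 * Real.log (aSeq n)
        - 2 * Real.log (Real.sqrt (2 * Real.pi)) := by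
    filter_upwards [ha1, hGEq, eventually_ge_atTop 2] with n h1 hG hn2
    have hA0 : 0 < aSeq n := lt_of_lt_of_le one_pos h1
    have hn0 : (0:ℝ) < n := Nat.cast_pos.mpr (by omega)
    have hg := g_pos (aSeq n)
    have hlogM : Real.log (M (aSeq n)) =
        Real.log (aSeq n) + Real.log (1 / (n:ℝ)) - Real.log (g (aSeq n)) := by
      rw [M_def, hG, Real.log_div (by positivity) hg.ne',
        Real.log_mul hA0.ne' (by positivity)]
    have hlogg : Real.log (g (aSeq n)) =
        -aSeq n ^ 2 / 2 - Real.log (Real.sqrt (2 * Real.pi)) := by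
      rw [g, Real.log_div (Real.exp_ne_zero _) sqrt2pi_pos.ne', Real.log_exp]
    have hlog1n : Real.log (1 / (n:ℝ)) = -Real.log n := by
      rw [one_div, Real.log_inv]
    rw [hlogM, hlogg, hlog1n]
    ring
  have hAL : Tendsto (fun n : ℕ => aSeq n + Real.sqrt (2 * Real.log n)) atTop atTop :=
    tendsto_atTop_mono (fun n => le_add_of_nonneg_right (Real.sqrt_nonneg _)) ha
  have hr1 : Tendsto (fun n : ℕ =>
      (2 * Real.log (M (aSeq n)) - 2 * Real.log (Real.sqrt (2 * Real.pi)))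
        / (aSeq n + Real.sqrt (2 * Real.log n))) atTop (nhds 0) := by
    have hlogM : Tendsto (fun n => Real.log (M (aSeq n))) atTop (nhds 0) := by
      have := (Real.continuousAt_log one_ne_zero).tendsto.comp hM
      simpa [Function.comp_def] using this
    exact ((hlogM.const_mul 2).sub_const _).div_atTop hAL
  have hr2 : Tendsto (fun n : ℕ =>
      -2 * Real.log (aSeq n) / (aSeq n + Real.sqrt (2 * Real.log n))) atTop (nhds 0) := by
    have hld : Tendsto (fun n => Real.log (aSeq n) / aSeq n) atTop (nhds 0) :=
      (Real.isLittleO_log_id_atTop.tendsto_div_nhds_zero).comp ha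
    apply squeeze_zero_norm' _ (by simpa using hld.const_mul 2)
    filter_upwards [ha1] with n h1
    have hA0 : 0 < aSeq n := lt_of_lt_of_le one_pos h1
    have hlognn : 0 ≤ Real.log (aSeq n) := Real.log_nonneg h1
    have hLnn : 0 ≤ Real.sqrt (2 * Real.log (n:ℕ)) := Real.sqrt_nonneg _
    rw [Real.norm_eq_abs, abs_div,
      abs_of_pos (by linarith : (0:ℝ) < aSeq n + Real.sqrt (2 * Real.log (n:ℕ))),
      abs_of_nonpos (by nlinarith : -2 * Real.log (aSeq n) ≤ 0),
      show -(-2 * Real.log (aSeq n)) = 2 * Real.log (aSeq n) from by ring,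
      show 2 * (Real.log (aSeq n) / aSeq n) = 2 * Real.log (aSeq n) / aSeq n from
        (mul_div_assoc _ _ _).symm]
    gcongr <;> linarith
  have hr : Tendsto (fun n : ℕ =>
      (aSeq n ^ 2 - 2 * Real.log n) / (aSeq n + Real.sqrt (2 * Real.log n)))
      atTop (nhds 0) := by
    have hsum : Tendsto (fun n : ℕ =>
        (2 * Real.log (M (aSeq n)) - 2 * Real.log (Real.sqrt (2 * Real.pi)))
          / (aSeq n + Real.sqrt (2 * Real.log n))
        + -2 * Real.log (aSeq n) / (aSeq n + Real.sqrt (2 * Real.log n)))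
        atTop (nhds (0 + 0)) := hr1.add hr2
    rw [add_zero] at hsum
    apply hsum.congr'
    filter_upwards [hkey] with n hk
    rw [← add_div]
    have heq : 2 * Real.log (M (aSeq n)) - 2 * Real.log (Real.sqrt (2 * Real.pi))
        + -2 * Real.log (aSeq n) = aSeq n ^ 2 - 2 * Real.log n := by linarith
    rw [heq]
  have hdiff : Tendsto (fun n : ℕ => aSeq n - Real.sqrt (2 * Real.log n)) atTop (nhds 0) := by
    apply hr.congr'
    filter_upwards [ha1, eventually_ge_atTop 1] with n h1 hn1
    have hA0 : 0 < aSeq n := lt_of_lt_of_le one_pos h1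
    have hLnn : 0 ≤ Real.sqrt (2 * Real.log (n:ℕ)) := Real.sqrt_nonneg _
    have hlognn : 0 ≤ Real.log (n:ℕ) := Real.log_nonneg (by exact_mod_cast hn1)
    have hL2 : Real.sqrt (2 * Real.log (n:ℕ)) ^ 2 = 2 * Real.log (n:ℕ) :=
      Real.sq_sqrt (by linarith)
    have hALpos : (0:ℝ) < aSeq n + Real.sqrt (2 * Real.log (n:ℕ)) := by linarith
    rw [div_eq_iff hALpos.ne']
    linear_combination hL2
  have hLinv : Tendsto (fun n : ℕ => (Real.sqrt (2 * Real.log n))⁻¹) atTop (nhds 0) :=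
    hL.inv_tendsto_atTop
  have hratio : Tendsto (fun n : ℕ => aSeq n / Real.sqrt (2 * Real.log n)) atTop (nhds 1) := by
    have h2 : Tendsto (fun n : ℕ =>
        (aSeq n - Real.sqrt (2 * Real.log n)) * (Real.sqrt (2 * Real.log n))⁻¹ + 1)
        atTop (nhds 1) := by
      simpa using (hdiff.mul hLinv).add_const 1
    apply h2.congr'
    filter_upwards [hL.eventually_gt_atTop 0] with n hn
    rw [sub_mul, mul_inv_cancel₀ hn.ne', div_eq_mul_inv]
    ring
  have hexp : Tendsto (fun n : ℕ =>
      Real.exp (-t * (aSeq n - Real.sqrt (2 * Real.log n)))) atTop (nhds 1) := by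
    have h2 : Tendsto (fun n : ℕ => -t * (aSeq n - Real.sqrt (2 * Real.log n)))
        atTop (nhds 0) := by simpa using hdiff.const_mul (-t)
    have := (Real.continuous_exp.tendsto 0).comp h2
    simpa [Function.comp_def] using this
  have hMinv : Tendsto (fun n => (M (aSeq n))⁻¹) atTop (nhds 1) := by
    simpa using hM.inv₀ one_ne_zero
  have hmain : Tendsto (fun n : ℕ => aSeq n / Real.sqrt (2 * Real.log n) * (M (aSeq n))⁻¹
      * Real.exp (-t * (aSeq n - Real.sqrt (2 * Real.log n)))) atTop (nhds 1) := by
    simpa using (hratio.mul hMinv).mul hexp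
  apply hmain.congr'
  filter_upwards [ha1, hGEq, eventually_ge_atTop 2, hL.eventually_gt_atTop 0]
    with n h1 hG hn2 hLpos
  have hA0 : 0 < aSeq n := lt_of_lt_of_le one_pos h1
  have hg := g_pos (aSeq n)
  have hn0 : (0:ℝ) < n := Nat.cast_pos.mpr (by omega)
  have hMval : M (aSeq n) = aSeq n * (1 / (n:ℝ)) / g (aSeq n) := by rw [M_def, hG]
  have hexpadd : Real.exp (-(aSeq n) * t)
      = Real.exp (-t * Real.sqrt (2 * Real.log (n:ℕ)))
        * Real.exp (-t * (aSeq n - Real.sqrt (2 * Real.log (n:ℕ)))) := by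
    rw [← Real.exp_add]
    ring_nf
  rw [hMval, hexpadd]
  unfold g
  set A := aSeq n with hA
  set L := Real.sqrt (2 * Real.log (n:ℕ)) with hLd
  set S := Real.sqrt (2 * Real.pi) with hS
  set X := Real.exp (-A ^ 2 / 2) with hX
  set E := Real.exp (-t * (A - L)) with hE
  set F := Real.exp (-t * L) with hF
  have hX0 : X ≠ 0 := by rw [hX]; exact Real.exp_ne_zero _
  have hE0 : E ≠ 0 := by rw [hE]; exact Real.exp_ne_zero _
  have hF0 : F ≠ 0 := by rw [hF]; exact Real.exp_ne_zero _
  have hS0 : S ≠ 0 := sqrt2pi_pos.ne'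
  have hn0' : (n:ℝ) ≠ 0 := hn0.ne'
  field_simp
end

section
/- Let d_n → ∞ with d_n/n = o(l^{-√(log n)}) for every l > 1, and a_n = Φ⁻¹(1-1/n). Then for every real t, Φ(a_n + t)^{d_n} → 1 as n → ∞. -/
open Filter MeasureTheory

section Aux

open Set Real

noncomputable def g (x : ℝ) : ℝ := Real.exp (-x ^ 2 / 2) / Real.sqrt (2 * Real.pi)

lemma g_eq (x : ℝ) : g x = Real.exp (-(1/2) * x ^ 2) / Real.sqrt (2 * Real.pi) := by
  unfold g; ring_nf

lemma g_pos (x : ℝ) : 0 < g x :=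
  div_pos (Real.exp_pos _) (Real.sqrt_pos.2 (by positivity))

lemma sqrt2pi_pos : 0 < Real.sqrt (2 * Real.pi) := Real.sqrt_pos.2 (by positivity)

lemma g_int : Integrable g := by
  have : Integrable (fun x : ℝ => Real.exp (-(1/2) * x ^ 2)) :=
    integrable_exp_neg_mul_sq (by norm_num)
  have h2 : g = fun x => Real.exp (-(1/2) * x ^ 2) / Real.sqrt (2 * Real.pi) := funext g_eq
  rw [h2]; exact this.div_const _

lemma g_total : ∫ x, g x = 1 := by
  have h : ∫ x, Real.exp (-(1/2) * x ^ 2) = Real.sqrt (Real.pi / (1/2)) :=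
    integral_gaussian (1/2)
  have : ∫ x, g x = (∫ x, Real.exp (-(1/2) * x ^ 2)) / Real.sqrt (2 * Real.pi) := by
    rw [← integral_div]; congr 1; ext x; rw [g_eq]
  rw [this, h]
  rw [show Real.pi / (1/2) = 2 * Real.pi by ring]
  exact div_self (ne_of_gt sqrt2pi_pos)

noncomputable def Ttail (x : ℝ) : ℝ := ∫ s in Set.Ioi x, g s

lemma Phi_eq_s12 (x : ℝ) : (∫ t in Set.Iic x, Real.exp (-t ^ 2 / 2) / Real.sqrt (2 * Real.pi)) = ∫ t in Set.Iic x, g t := rfl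

lemma Phi_add_T (x : ℝ) : (∫ t in Set.Iic x, g t) + Ttail x = 1 := by
  rw [Ttail, intervalIntegral.integral_Iic_add_Ioi g_int.integrableOn g_int.integrableOn, g_total]

lemma integral_mul_exp_Ioi (x : ℝ) :
    ∫ s in Set.Ioi x, s * Real.exp (-s ^ 2 / 2) = Real.exp (-x ^ 2 / 2) := by
  have hderiv : ∀ s ∈ Set.Ici x, HasDerivAt (fun u : ℝ => -Real.exp (-u ^ 2 / 2))
      (s * Real.exp (-s ^ 2 / 2)) s := by
    intro s _
    have h1 : HasDerivAt (fun u : ℝ => -u ^ 2 / 2) (-s) s := by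
      have := ((hasDerivAt_pow 2 s).neg).div_const 2
      simpa using this.congr_deriv (by push_cast; ring)
    have : HasDerivAt (fun u : ℝ => -Real.exp (-u ^ 2 / 2)) (-(Real.exp (-s ^ 2 / 2) * -s)) s := (h1.exp).neg
    convert this using 1
    ring
  have hint : IntegrableOn (fun s : ℝ => s * Real.exp (-s ^ 2 / 2)) (Set.Ioi x) := by
    have : Integrable (fun s : ℝ => s * Real.exp (-(1/2) * s ^ 2)) :=
      integrable_mul_exp_neg_mul_sq (by norm_num)
    have h2 : (fun s : ℝ => s * Real.exp (-s ^ 2 / 2)) = fun s : ℝ => s * Real.exp (-(1/2) * s ^ 2) := by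
      funext s; ring_nf
    rw [h2]; exact this.integrableOn
  have hlim : Tendsto (fun u : ℝ => -Real.exp (-u ^ 2 / 2)) atTop (nhds 0) := by
    rw [show (0:ℝ) = -0 by ring]
    refine Tendsto.neg ?_
    refine Real.tendsto_exp_atBot.comp ?_
    apply Tendsto.atBot_div_const (by norm_num : (0:ℝ) < 2)
    exact tendsto_neg_atBot_iff.2 (tendsto_pow_atTop (by norm_num))
  have := MeasureTheory.integral_Ioi_of_hasDerivAt_of_tendsto' hderiv hint hlim
  rw [this]; ring

lemma Ttail_le {x : ℝ} (hx : 1 ≤ x) : Ttail x ≤ Real.exp (-x ^ 2 / 2) / Real.sqrt (2 * Real.pi) := by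
  have hint : IntegrableOn (fun s : ℝ => s * Real.exp (-s ^ 2 / 2) / Real.sqrt (2 * Real.pi)) (Set.Ioi x) := by
    have : Integrable (fun s : ℝ => s * Real.exp (-(1/2) * s ^ 2)) :=
      integrable_mul_exp_neg_mul_sq (by norm_num)
    have h2 : (fun s : ℝ => s * Real.exp (-s ^ 2 / 2) / Real.sqrt (2 * Real.pi))
        = fun s : ℝ => s * Real.exp (-(1/2) * s ^ 2) / Real.sqrt (2 * Real.pi) := by
      funext s; ring_nf
    rw [h2]; exact (this.div_const _).integrableOn
  have hmono : Ttail x ≤ ∫ s in Set.Ioi x, s * Real.exp (-s ^ 2 / 2) / Real.sqrt (2 * Real.pi) := by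
    refine setIntegral_mono_on g_int.integrableOn hint measurableSet_Ioi ?_
    intro s hs
    have hs1 : 1 ≤ s := hx.trans (le_of_lt hs)
    unfold g
    refine (div_le_div_iff_of_pos_right sqrt2pi_pos).2 ?_
    nlinarith [Real.exp_pos (-s ^ 2 / 2)]
  calc Ttail x ≤ ∫ s in Set.Ioi x, s * Real.exp (-s ^ 2 / 2) / Real.sqrt (2 * Real.pi) := hmono
    _ = (∫ s in Set.Ioi x, s * Real.exp (-s ^ 2 / 2)) / Real.sqrt (2 * Real.pi) := by
        rw [integral_div]
    _ = Real.exp (-x ^ 2 / 2) / Real.sqrt (2 * Real.pi) := by rw [integral_mul_exp_Ioi]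

lemma le_Ttail {x : ℝ} (hx : 0 ≤ x) :
    Real.exp (-(x + 1) ^ 2 / 2) / Real.sqrt (2 * Real.pi) ≤ Ttail x := by
  have h1 : Real.exp (-(x + 1) ^ 2 / 2) / Real.sqrt (2 * Real.pi) * (volume (Set.Ioc x (x+1))).toReal
      ≤ ∫ s in Set.Ioc x (x+1), g s := by
    refine setIntegral_ge_of_const_le_real measurableSet_Ioc (by simp) ?_ (g_int.integrableOn)
    intro s hs
    unfold g
    refine (div_le_div_iff_of_pos_right sqrt2pi_pos).2 (Real.exp_le_exp.2 ?_)
    nlinarith [hs.1, hs.2, hx]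
  have h2 : (volume (Set.Ioc x (x+1))).toReal = 1 := by
    rw [Real.volume_Ioc]; norm_num
  rw [h2, mul_one] at h1
  refine h1.trans ?_
  refine setIntegral_mono_set g_int.integrableOn ?_ ?_
  · exact Filter.Eventually.of_forall fun s => (g_pos s).le
  · exact HasSubset.Subset.eventuallyLE Set.Ioc_subset_Ioi_self

lemma Ttail_anti : Antitone Ttail := by
  intro x y hxy
  refine setIntegral_mono_set g_int.integrableOn
    (Filter.Eventually.of_forall fun s => (g_pos s).le)
    (HasSubset.Subset.eventuallyLE (Set.Ioi_subset_Ioi hxy))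

lemma Ttail_pos (x : ℝ) : 0 < Ttail x := by
  have h := le_Ttail (le_max_right x 0)
  have := Ttail_anti (le_max_left x 0)
  have hp : 0 < Real.exp (-(max x 0 + 1) ^ 2 / 2) / Real.sqrt (2 * Real.pi) :=
    div_pos (Real.exp_pos _) sqrt2pi_pos
  linarith

lemma Ttail_lt_one (x : ℝ) : Ttail x ≤ 1 := by
  have h := Phi_add_T x
  have hnn : 0 ≤ ∫ t in Set.Iic x, g t :=
    setIntegral_nonneg measurableSet_Iic fun s _ => (g_pos s).le
  linarith

noncomputable def PhiFn (x : ℝ) : ℝ := ∫ t in Set.Iic x, g t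

lemma PhiFn_nonneg (x : ℝ) : 0 ≤ PhiFn x :=
  setIntegral_nonneg measurableSet_Iic fun s _ => (g_pos s).le

lemma PhiFn_eq_one_sub (x : ℝ) : PhiFn x = 1 - Ttail x := by
  have := Phi_add_T x; unfold PhiFn; linarith

lemma PhiFn_le_one (x : ℝ) : PhiFn x ≤ 1 := by
  rw [PhiFn_eq_one_sub]; have := Ttail_pos x; linarith

lemma PhiFn_lt_one (x : ℝ) : PhiFn x < 1 := by
  rw [PhiFn_eq_one_sub]; have := Ttail_pos x; linarith

lemma PhiFn_add_Ioc {x y : ℝ} (hxy : x ≤ y) :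
    PhiFn y = PhiFn x + ∫ s in Set.Ioc x y, g s := by
  unfold PhiFn
  rw [← setIntegral_union (Set.Iic_disjoint_Ioc le_rfl) measurableSet_Ioc
    g_int.integrableOn g_int.integrableOn, Set.Iic_union_Ioc_eq_Iic hxy]

lemma PhiFn_strictMono : StrictMono PhiFn := by
  intro x y hxy
  rw [PhiFn_add_Ioc hxy.le]
  have : 0 < ∫ s in Set.Ioc x y, g s := by
    refine (setIntegral_pos_iff_support_of_nonneg_ae
      (Filter.Eventually.of_forall fun s => (g_pos s).le) g_int.integrableOn).2 ?_
    have hsupp : (Function.support g) ∩ Set.Ioc x y = Set.Ioc x y := by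
      rw [Set.inter_eq_right]
      intro s _
      exact (g_pos s).ne'
    rw [hsupp, Real.volume_Ioc]
    simp [hxy]
  linarith

lemma PhiFn_mono : Monotone PhiFn := PhiFn_strictMono.monotone

lemma PhiFn_lipschitz {x y : ℝ} (hxy : x ≤ y) :
    PhiFn y - PhiFn x ≤ (y - x) / Real.sqrt (2 * Real.pi) := by
  rw [PhiFn_add_Ioc hxy]
  have : (∫ s in Set.Ioc x y, g s) ≤ ∫ s in Set.Ioc x y, 1 / Real.sqrt (2 * Real.pi) := by
    refine setIntegral_mono_on g_int.integrableOn (integrableOn_const (by simp)) measurableSet_Ioc ?_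
    intro s _
    unfold g
    refine (div_le_div_iff_of_pos_right sqrt2pi_pos).2 ?_
    simpa using Real.exp_le_one_iff.2 (by nlinarith [sq_nonneg s])
  have h2 : (∫ s in Set.Ioc x y, (1 : ℝ) / Real.sqrt (2 * Real.pi)) = (y - x) / Real.sqrt (2 * Real.pi) := by
    rw [setIntegral_const]
    rw [Real.volume_real_Ioc_of_le hxy]
    simp [smul_eq_mul]
    ring
  linarith

lemma PhiFn_continuous : Continuous PhiFn := by
  have : LipschitzWith (Real.sqrt (2 * Real.pi))⁻¹.toNNReal PhiFn := by
    refine LipschitzWith.of_dist_le_mul fun x y => ?_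
    rw [Real.dist_eq, Real.dist_eq]
    rcases le_total x y with h | h
    · rw [abs_of_nonpos (by have := PhiFn_mono h; linarith), abs_of_nonpos (by linarith)]
      have := PhiFn_lipschitz h
      rw [Real.coe_toNNReal _ (by positivity)]
      rw [div_eq_inv_mul] at this
      linarith
    · rw [abs_of_nonneg (by have := PhiFn_mono h; linarith), abs_of_nonneg (by linarith)]
      have := PhiFn_lipschitz h
      rw [Real.coe_toNNReal _ (by positivity)]
      rw [div_eq_inv_mul] at this
      linarith
  exact this.continuous

lemma PhiFn_tendsto_one : Tendsto (fun n : ℕ => PhiFn n) atTop (nhds 1) := by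
  have h := tendsto_setIntegral_of_monotone (f := g) (μ := volume)
    (s := fun n : ℕ => Set.Iic (n : ℝ)) (fun n => measurableSet_Iic)
    (fun m n hmn => Set.Iic_subset_Iic.2 (by exact_mod_cast hmn)) ?_
  · have huniv : (⋃ n : ℕ, Set.Iic (n : ℝ)) = Set.univ := by
      rw [Set.iUnion_eq_univ_iff]
      intro x
      obtain ⟨n, hn⟩ := exists_nat_ge x
      exact ⟨n, hn⟩
    rw [huniv] at h
    simpa [PhiFn, g_total] using h
  · exact g_int.integrableOn

lemma Ttail_tendsto_one : Tendsto (fun n : ℕ => Ttail (-(n : ℝ))) atTop (nhds 1) := by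
  have h := tendsto_setIntegral_of_monotone (f := g) (μ := volume)
    (s := fun n : ℕ => Set.Ioi (-(n : ℝ))) (fun n => measurableSet_Ioi)
    (fun m n hmn => Set.Ioi_subset_Ioi (by exact_mod_cast neg_le_neg (Nat.cast_le.2 hmn))) ?_
  · have huniv : (⋃ n : ℕ, Set.Ioi (-(n : ℝ))) = Set.univ := by
      rw [Set.iUnion_eq_univ_iff]
      intro x
      obtain ⟨n, hn⟩ := exists_nat_gt (-x)
      exact ⟨n, by simpa using neg_lt_of_neg_lt hn⟩
    rw [huniv] at h
    simpa [Ttail, g_total] using h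
  · exact g_int.integrableOn

lemma PhiFn_surj {p : ℝ} (h0 : 0 < p) (h1 : p < 1) : ∃ x, PhiFn x = p := by
  obtain ⟨b, hb⟩ := (PhiFn_tendsto_one.eventually (eventually_gt_nhds h1)).exists
  obtain ⟨a, ha⟩ : ∃ n : ℕ, PhiFn (-(n : ℝ)) < p := by
    have := Ttail_tendsto_one.eventually (eventually_gt_nhds (by linarith : 1 - p < 1))
    obtain ⟨n, hn⟩ := this.exists
    exact ⟨n, by rw [PhiFn_eq_one_sub]; linarith⟩
  have hab : -(a : ℝ) ≤ (b : ℝ) := by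
    by_contra hcon
    push_neg at hcon
    have := PhiFn_mono hcon.le
    linarith
  have := intermediate_value_Icc hab PhiFn_continuous.continuousOn
  have hp : p ∈ Set.Icc (PhiFn (-(a:ℝ))) (PhiFn b) := ⟨ha.le, hb.le⟩
  obtain ⟨x, _, hx⟩ := this hp
  exact ⟨x, hx⟩


lemma Phi_eq_PhiFn : Phi = PhiFn := rfl

lemma Phi_aSeq {n : ℕ} (hn : 2 ≤ n) : Phi (aSeq n) = 1 - 1 / n := by
  have hn0 : (0:ℝ) < n := by positivity
  have h2 : (2:ℝ) ≤ n := by exact_mod_cast hn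
  have h0 : (0:ℝ) < 1 - 1/n := by
    rw [sub_pos, div_lt_one hn0]; linarith
  have h1 : (1:ℝ) - 1/n < 1 := by
    have : (0:ℝ) < 1/n := by positivity
    linarith
  obtain ⟨x, hx⟩ := PhiFn_surj h0 h1
  exact Function.invFun_eq ⟨x, by rw [Phi_eq_PhiFn]; exact hx⟩

lemma Ttail_aSeq {n : ℕ} (hn : 2 ≤ n) : Ttail (aSeq n) = 1 / n := by
  have h := Phi_aSeq hn
  rw [Phi_eq_PhiFn, PhiFn_eq_one_sub] at h
  linarith

lemma aSeq_tendsto : Tendsto aSeq atTop atTop := by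
  rw [tendsto_atTop]
  intro M
  have hTM := Ttail_pos M
  have h1 : Tendsto (fun n : ℕ => (1:ℝ)/n) atTop (nhds 0) := tendsto_one_div_atTop_nhds_zero_nat
  filter_upwards [h1.eventually (eventually_lt_nhds hTM), eventually_ge_atTop 2] with n hn h2
  by_contra hcon
  push_neg at hcon
  have := Ttail_anti hcon.le
  rw [Ttail_aSeq h2] at this
  linarith

lemma one_le_sqrt2pi : 1 ≤ Real.sqrt (2 * Real.pi) := by
  nlinarith [Real.sq_sqrt (show (0:ℝ) ≤ 2 * Real.pi by positivity),
    Real.sqrt_nonneg (2 * Real.pi), Real.pi_gt_three]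

lemma key (d : ℕ → ℕ)
    (hsmall : ∀ l : ℝ, 1 < l →
      Tendsto (fun n : ℕ => (d n : ℝ) * l ^ Real.sqrt (Real.log n) / n) atTop (nhds 0))
    (t : ℝ) :
    Tendsto (fun n : ℕ => (d n : ℝ) * Ttail (aSeq n + t)) atTop (nhds 0) := by
  set c : ℝ := max (1 - t) 1 with hc
  have hc0 : 0 < c := lt_of_lt_of_le one_pos (le_max_right _ _)
  set l : ℝ := Real.exp (c * Real.sqrt 2) with hl
  have hl1 : 1 < l := by
    rw [hl, Real.one_lt_exp_iff]
    exact mul_pos hc0 (by positivity)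
  have hC : Tendsto (fun n : ℕ => (Real.sqrt (2 * Real.pi) * Real.exp (1/2)) *
      ((d n : ℝ) * l ^ Real.sqrt (Real.log n) / n)) atTop (nhds 0) := by
    simpa using (hsmall l hl1).const_mul (Real.sqrt (2 * Real.pi) * Real.exp (1/2))
  refine squeeze_zero' ?_ ?_ hC
  · filter_upwards with n
    exact mul_nonneg (Nat.cast_nonneg _) (Ttail_pos _).le
  · filter_upwards [eventually_ge_atTop 2,
      aSeq_tendsto.eventually_ge_atTop (max 1 (1 - t))] with n hn2 han
    set a : ℝ := aSeq n with ha
    have ha1 : 1 ≤ a := le_trans (le_max_left _ _) han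
    have hat : 1 ≤ a + t := by
      have := le_trans (le_max_right 1 (1 - t)) han
      linarith
    have ha0 : 0 ≤ a := by linarith
    have hn0 : (0:ℝ) < n := by positivity
    have hT : Ttail a = 1 / n := Ttail_aSeq hn2
    -- upper bound on a
    have haub : a ≤ Real.sqrt (2 * Real.log n) := by
      have h1 : (1:ℝ)/n ≤ Real.exp (-a ^ 2 / 2) := by
        have := Ttail_le ha1
        rw [hT] at this
        calc (1:ℝ)/n ≤ Real.exp (-a^2/2) / Real.sqrt (2 * Real.pi) := this
          _ ≤ Real.exp (-a^2/2) / 1 := by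
              apply div_le_div_of_nonneg_left (Real.exp_pos _).le one_pos one_le_sqrt2pi
          _ = Real.exp (-a^2/2) := by rw [div_one]
      have h2 := Real.log_le_log (by positivity) h1
      rw [Real.log_exp, one_div, Real.log_inv] at h2
      rw [Real.le_sqrt ha0 (by nlinarith)]
      nlinarith
    -- lower bound on tail at a
    have hexp : Real.exp (-(a + 1) ^ 2 / 2) ≤ Real.sqrt (2 * Real.pi) / n := by
      have := le_Ttail ha0
      rw [hT, div_le_div_iff₀ sqrt2pi_pos hn0] at this
      rw [le_div_iff₀ hn0]
      linarith
    -- main chain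
    have step1 : Ttail (a + t) ≤ Real.exp (-(a + t) ^ 2 / 2) := by
      calc Ttail (a + t) ≤ Real.exp (-(a+t)^2/2) / Real.sqrt (2 * Real.pi) := Ttail_le hat
        _ ≤ Real.exp (-(a+t)^2/2) / 1 :=
            div_le_div_of_nonneg_left (Real.exp_pos _).le one_pos one_le_sqrt2pi
        _ = _ := div_one _
    have step2 : Real.exp (-(a + t) ^ 2 / 2) ≤
        Real.exp (-(a + 1) ^ 2 / 2) * Real.exp ((1 - t) * a + 1/2) := by
      rw [← Real.exp_add]
      apply Real.exp_le_exp.2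
      nlinarith [sq_nonneg t]
    have step3 : (1 - t) * a + 1/2 ≤ c * Real.sqrt (2 * Real.log n) + 1/2 := by
      have h1 : (1 - t) * a ≤ c * a := mul_le_mul_of_nonneg_right (le_max_left _ _) ha0
      have h2 : c * a ≤ c * Real.sqrt (2 * Real.log n) :=
        mul_le_mul_of_nonneg_left haub hc0.le
      linarith
    have hrpow : Real.exp (c * Real.sqrt (2 * Real.log n)) = l ^ Real.sqrt (Real.log n) := by
      rw [Real.rpow_def_of_pos (by positivity : (0:ℝ) < l), hl, Real.log_exp]
      congr 1
      rw [Real.sqrt_mul (by norm_num : (0:ℝ) ≤ 2) (Real.log n)]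
      ring
    calc (d n : ℝ) * Ttail (a + t)
        ≤ (d n : ℝ) * (Real.exp (-(a + 1) ^ 2 / 2) * Real.exp ((1 - t) * a + 1/2)) := by
          apply mul_le_mul_of_nonneg_left (step1.trans step2) (Nat.cast_nonneg _)
      _ ≤ (d n : ℝ) * ((Real.sqrt (2 * Real.pi) / n) * Real.exp (c * Real.sqrt (2 * Real.log n) + 1/2)) := by
          apply mul_le_mul_of_nonneg_left ?_ (Nat.cast_nonneg _)
          apply mul_le_mul hexp (Real.exp_le_exp.2 step3) (Real.exp_pos _).le
            (by positivity)
      _ = (Real.sqrt (2 * Real.pi) * Real.exp (1/2)) * ((d n : ℝ) * l ^ Real.sqrt (Real.log n) / n) := by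
          rw [← hrpow, Real.exp_add]
          field_simp

end Aux

theorem stmt12 (d : ℕ → ℕ) (hd : Tendsto d atTop atTop)
    (hsmall : ∀ l : ℝ, 1 < l →
      Tendsto (fun n : ℕ => (d n : ℝ) * l ^ Real.sqrt (Real.log n) / n) atTop (nhds 0))
    (t : ℝ) :
    Tendsto (fun n : ℕ => (Phi (aSeq n + t)) ^ (d n)) atTop (nhds 1) := by
  have hkey := key d hsmall t
  have hlow : Tendsto (fun n : ℕ => 1 - (d n : ℝ) * Ttail (aSeq n + t)) atTop (nhds 1) := by
    simpa using (tendsto_const_nhds (x := (1:ℝ)) (f := atTop)).sub hkey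
  refine tendsto_of_tendsto_of_tendsto_of_le_of_le' hlow tendsto_const_nhds ?_ ?_
  · filter_upwards with n
    have hT1 : Ttail (aSeq n + t) ≤ 1 := Ttail_lt_one _
    have hT0 : 0 < Ttail (aSeq n + t) := Ttail_pos _
    have hb := one_add_mul_le_pow (a := -(Ttail (aSeq n + t))) (by linarith) (d n)
    rw [Phi_eq_PhiFn, PhiFn_eq_one_sub]
    calc 1 - (d n : ℝ) * Ttail (aSeq n + t) = 1 + (d n : ℝ) * (-(Ttail (aSeq n + t))) := by ring
      _ ≤ (1 + -(Ttail (aSeq n + t))) ^ (d n) := hb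
      _ = (1 - Ttail (aSeq n + t)) ^ (d n) := by ring_nf
  · filter_upwards with n
    rw [Phi_eq_PhiFn]
    exact pow_le_one₀ (PhiFn_nonneg _) (PhiFn_le_one _)
end
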